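/- arXiv:math/0602364 — 6 statements merged into one kernel-verified Lean document; each statement's English description precedes it below -/
import Mathlib

section
/- Let x = [[0,−1],[1,−1]] and y = α·[[0,1/2],[1,−1]] in SL₂(ℤ₃), let t = y·x·y·x⁻¹·y, and let c = [[−1,1],[0,1]] ∈ GL₂(ℤ₃). Then: (a) x³ = 1; (b) c·x·c⁻¹ = x⁻¹; (c) c·y·c⁻¹ = y⁻¹; and (d) c·t·c⁻¹ = t. (These verify that the map sending the generators of the pro-3 group H = ⟨x, y | x³, t⁻¹σ(t)⟩ to these matrices respects the relators, where σ inverts both generators.) -/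
/-!
Since `x` has trace `-1`, Cayley–Hamilton gives `x² + x + 1 = 0`, hence `x³ = 1`.
Writing `A = [[a, b], [c', d]]`, one computes `c A c⁻¹ = [[a - c', c' + d - a - b], [-c', c' + d]]`:
this is the adjugate `A⁻¹` exactly when `a = c' + d`, which holds for `x` and `y`, and it is `A`
when `c' = 0` and `d - a = 2b`. Multiplying out, `t = α³ [[-h, h - h³], [0, h²]]`, and
`h² + h = 2(h - h³)` because `2h = 1`.
-/

open Matrix MatrixGroups

namespace Matrix.SpecialLinearGroup

variable {R : Type*} [CommRing R]

theorem sq_add_self_add_one_eq_zero_of_trace_eq_neg_one (A : SL(2, R))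
    (hA : trace (A : Matrix (Fin 2) (Fin 2) R) = -1) :
    (A : Matrix (Fin 2) (Fin 2) R) ^ 2 + A + 1 = 0 := by
  have hdet := A.det_coe
  rw [det_fin_two] at hdet
  rw [trace_fin_two] at hA
  ext i j
  fin_cases i <;> fin_cases j <;> simp [sq, mul_apply, Fin.sum_univ_two]
  · linear_combination A 0 0 * hA - hdet
  · linear_combination A 0 1 * hA
  · linear_combination A 1 0 * hA
  · linear_combination A 1 1 * hA - hdet

theorem pow_three_eq_one_of_trace_eq_neg_one (A : SL(2, R))
    (hA : trace (A : Matrix (Fin 2) (Fin 2) R) = -1) : A ^ 3 = 1 := by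
  have h := sq_add_self_add_one_eq_zero_of_trace_eq_neg_one A hA
  refine Subtype.ext ?_
  rw [coe_pow, coe_one, ← sub_eq_zero]
  calc (A : Matrix (Fin 2) (Fin 2) R) ^ 3 - 1 = (A - 1) * (A ^ 2 + A + 1) := by noncomm_ring
    _ = 0 := by rw [h, mul_zero]

variable (c : GL (Fin 2) R) (hc : (c : Matrix (Fin 2) (Fin 2) R) = !![-1, 1; 0, 1])
include hc

theorem conj_eq_inv_of_apply_zero_zero_eq_add (A : SL(2, R)) (hA : A 0 0 = A 1 0 + A 1 1) :
    c * (A : GL (Fin 2) R) * c⁻¹ = ((A⁻¹ : SL(2, R)) : GL (Fin 2) R) := by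
  rw [mul_inv_eq_iff_eq_mul, Units.ext_iff]
  simp only [Units.val_mul, hc, coe_GL_coe_matrix, coe_inv, adjugate_fin_two]
  ext i j
  fin_cases i <;> fin_cases j <;> simp [mul_apply, Fin.sum_univ_two, hA]
  ring

theorem conj_eq_self_of_apply_one_zero_eq_zero (A : SL(2, R)) (h10 : A 1 0 = 0)
    (hA : A 1 1 - A 0 0 = 2 * A 0 1) :
    c * (A : GL (Fin 2) R) * c⁻¹ = A := by
  rw [mul_inv_eq_iff_eq_mul, Units.ext_iff]
  simp only [Units.val_mul, hc, coe_GL_coe_matrix]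
  ext i j
  fin_cases i <;> fin_cases j <;> simp [mul_apply, Fin.sum_univ_two, h10]
  linear_combination hA

end Matrix.SpecialLinearGroup

open Matrix.SpecialLinearGroup in
theorem stmt_0_general (α h : ℤ_[3])
    (hh : 2 * h = 1)
    (x y t : SL(2, ℤ_[3]))
    (hx : (x : Matrix (Fin 2) (Fin 2) ℤ_[3]) = !![0, -1; 1, -1])
    (hy : (y : Matrix (Fin 2) (Fin 2) ℤ_[3]) = α • !![0, h; 1, -1])
    (ht : t = y * x * y * x⁻¹ * y)
    (c : GL (Fin 2) ℤ_[3])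
    (hc : (c : Matrix (Fin 2) (Fin 2) ℤ_[3]) = !![-1, 1; 0, 1]) :
    x ^ 3 = 1 ∧
    c * (x : GL (Fin 2) ℤ_[3]) * c⁻¹ = ((x⁻¹ : SL(2, ℤ_[3])) : GL (Fin 2) ℤ_[3]) ∧
    c * (y : GL (Fin 2) ℤ_[3]) * c⁻¹ = ((y⁻¹ : SL(2, ℤ_[3])) : GL (Fin 2) ℤ_[3]) ∧
    c * (t : GL (Fin 2) ℤ_[3]) * c⁻¹ = (t : GL (Fin 2) ℤ_[3]) := by
  have ht' : (t : Matrix (Fin 2) (Fin 2) ℤ_[3]) = α ^ 3 • !![-h, h - h ^ 3; 0, h ^ 2] := by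
    rw [ht]
    simp only [coe_mul, coe_inv, hx, hy, adjugate_fin_two]
    ext i j
    fin_cases i <;> fin_cases j <;> simp [mul_apply, Fin.sum_univ_two] <;> ring
  refine ⟨pow_three_eq_one_of_trace_eq_neg_one x ?_,
    conj_eq_inv_of_apply_zero_zero_eq_add c hc x ?_,
    conj_eq_inv_of_apply_zero_zero_eq_add c hc y ?_,
    conj_eq_self_of_apply_one_zero_eq_zero c hc t ?_ ?_⟩
  · simp [hx, trace_fin_two]
  · simp [hx]
  · simp [hy]
  · simp [ht']
  · simp [ht']
    linear_combination (α ^ 3 * h * (h + 1)) * hh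

/-- With `x = [[0,-1],[1,-1]]` and `y = α·[[0,1/2],[1,-1]]` in `SL₂(ℤ₃)`
(where `α² = -2`, `α ≡ 1 mod 3`, and `h = 1/2`), `t = y·x·y·x⁻¹·y`, and
`c = [[-1,1],[0,1]] ∈ GL₂(ℤ₃)`, we have `x³ = 1`, `c·x·c⁻¹ = x⁻¹`, `c·y·c⁻¹ = y⁻¹`
and `c·t·c⁻¹ = t`. -/
theorem stmt_0 (α h : ℤ_[3]) (hα2 : α ^ 2 = -2) (hα1 : (3 : ℤ_[3]) ∣ (α - 1))
    (hh : 2 * h = 1)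
    (x y t : SL(2, ℤ_[3]))
    (hx : (x : Matrix (Fin 2) (Fin 2) ℤ_[3]) = !![0, -1; 1, -1])
    (hy : (y : Matrix (Fin 2) (Fin 2) ℤ_[3]) = α • !![0, h; 1, -1])
    (ht : t = y * x * y * x⁻¹ * y)
    (c : GL (Fin 2) ℤ_[3])
    (hc : (c : Matrix (Fin 2) (Fin 2) ℤ_[3]) = !![-1, 1; 0, 1]) :
    x ^ 3 = 1 ∧
    c * (x : GL (Fin 2) ℤ_[3]) * c⁻¹ = ((x⁻¹ : SL(2, ℤ_[3])) : GL (Fin 2) ℤ_[3]) ∧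
    c * (y : GL (Fin 2) ℤ_[3]) * c⁻¹ = ((y⁻¹ : SL(2, ℤ_[3])) : GL (Fin 2) ℤ_[3]) ∧
    c * (t : GL (Fin 2) ℤ_[3]) * c⁻¹ = (t : GL (Fin 2) ℤ_[3]) :=
  stmt_0_general α h hh x y t hx hy ht c hc
end

section
/- The closed subgroup P of SL₂(ℤ₃) generated by x and y equals the preimage, under the reduction homomorphism SL₂(ℤ₃) → SL₂(ℤ/3ℤ), of the cyclic subgroup of order 3 generated by the image of x; in particular P is a closed subgroup of index 8 in SL₂(ℤ₃) (a Sylow pro-3 subgroup). -/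
open Matrix MatrixGroups

noncomputable section

/-- The topology on `SL(n, R)` induced from the space of matrices. -/
instance {n : Type*} [DecidableEq n] [Fintype n] {R : Type*} [CommRing R] [TopologicalSpace R] :
    TopologicalSpace (SpecialLinearGroup n R) :=
  inferInstanceAs (TopologicalSpace {A : Matrix n n R // A.det = 1})

/-- `SL(n, R)` is a topological group. -/
instance {n : Type*} [DecidableEq n] [Fintype n] {R : Type*} [CommRing R] [TopologicalSpace R]
    [IsTopologicalRing R] : IsTopologicalGroup (SpecialLinearGroup n R) where
  continuous_mul := by
    apply continuous_induced_rng.2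
    exact (continuous_subtype_val.comp continuous_fst).mul (continuous_subtype_val.comp continuous_snd)
  continuous_inv := by
    have h : Continuous fun A : SpecialLinearGroup n R => ((A : Matrix n n R)).adjugate :=
      Continuous.matrix_adjugate continuous_subtype_val
    have e : (fun A : SpecialLinearGroup n R => ((A⁻¹ : SpecialLinearGroup n R) : Matrix n n R))
        = fun A : SpecialLinearGroup n R => ((A : Matrix n n R)).adjugate := by
      funext A; exact Matrix.SpecialLinearGroup.coe_inv A
    apply continuous_induced_rng.2
    show Continuous fun A : SpecialLinearGroup n R => ((A⁻¹ : SpecialLinearGroup n R) : Matrix n n R)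
    rw [e]; exact h
/-!
Reduction mod 3 sends `x` and `y` to the same element of order 3, so `P` lies in the preimage `Q`
of the group it generates, which is closed because reduction is locally constant.
Conversely, `α ≡ 4 (mod 9)` gives `y x⁻¹ ≡ 1 + 3 diag(-1, 1) (mod 9)`; with its conjugates by
`x^{±1}` this yields elements `1 + 3E (mod 9)` of `⟨x, y⟩` for `E` running through a basis of the
trace-zero matrices mod 3. Cubing turns `1 + 3ⁿE (mod 3ⁿ⁺¹)` into `1 + 3ⁿ⁺¹E (mod 3ⁿ⁺²)`, so for
every `n ≥ 1` the group `⟨x, y⟩` meets each class `1 + 3ⁿA (mod 3ⁿ⁺¹)` with `3 ∣ tr A`; these are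
exactly the classes of determinant-one matrices `≡ 1 (mod 3ⁿ)`. Successive approximation then puts
the kernel of reduction, hence `Q`, inside `P`, and `[SL₂(ℤ₃) : Q] = |SL₂(𝔽₃)| / 3 = 8`.
-/

open Topology Filter

namespace Matrix

variable {l m n R : Type*} [CommRing R]

def ModEq (q : R) (A B : Matrix m n R) : Prop :=
  ∀ i j, q ∣ A i j - B i j

namespace ModEq

variable {q : R} {A B C : Matrix m n R}

protected theorem refl (A : Matrix m n R) : ModEq q A A :=
  fun i j => by simp

protected theorem symm (h : ModEq q A B) : ModEq q B A :=
  fun i j => by simpa using (h i j).neg_right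

protected theorem trans (h₁ : ModEq q A B) (h₂ : ModEq q B C) : ModEq q A C :=
  fun i j => by simpa using dvd_add (h₁ i j) (h₂ i j)

theorem of_dvd {q' : R} (hq : q ∣ q') (h : ModEq q' A B) : ModEq q A B :=
  fun i j => hq.trans (h i j)

protected theorem add_left (C : Matrix m n R) (h : ModEq q A B) : ModEq q (C + A) (C + B) :=
  fun i j => by simpa using h i j

protected theorem smul (c : R) (h : ModEq q A B) : ModEq (c * q) (c • A) (c • B) :=
  fun i j => by simpa [← mul_sub] using mul_dvd_mul_left c (h i j)

protected theorem mul [Fintype n] {A' B' : Matrix n l R} (h : ModEq q A B) (h' : ModEq q A' B') :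
    ModEq q (A * A') (B * B') := fun i j => by
  rw [mul_apply, mul_apply, ← Finset.sum_sub_distrib]
  refine Finset.dvd_sum fun k _ => ?_
  rw [show A i k * A' k j - B i k * B' k j =
    (A i k - B i k) * A' k j + B i k * (A' k j - B' k j) by ring]
  exact dvd_add ((h i k).mul_right _) ((h' k j).mul_left _)

end ModEq

theorem modEq_iff_exists_eq_add {q : R} {A B : Matrix m n R} :
    ModEq q A B ↔ ∃ C, A = B + q • C := by
  constructor
  · intro h
    choose C hC using h
    exact ⟨of C, by ext i j; rw [add_apply, smul_apply, of_apply, smul_eq_mul, ← hC i j]; ring⟩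
  · rintro ⟨C, rfl⟩ i j
    simp

theorem modEq_fin_two_of {q a b c d a' b' c' d' : R} :
    ModEq q !![a, b; c, d] !![a', b'; c', d'] ↔
      q ∣ a - a' ∧ q ∣ b - b' ∧ q ∣ c - c' ∧ q ∣ d - d' := by
  simp [ModEq, Fin.forall_fin_two, and_assoc]

theorem dvd_trace_of_det_one_add_pow_smul_eq_one [IsDomain R] {π : R} (hπ : π ≠ 0) {n : ℕ}
    (hn : 1 ≤ n) {A : Matrix (Fin 2) (Fin 2) R} (h : (1 + π ^ n • A).det = 1) : π ∣ A.trace := by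
  have hdet : (1 + π ^ n • A).det = 1 + π ^ n * (A.trace + π ^ n * A.det) := by
    rw [det_fin_two, det_fin_two, trace_fin_two]
    simp only [add_apply, smul_apply, one_apply_eq, one_apply_ne zero_ne_one,
      one_apply_ne one_ne_zero, smul_eq_mul]
    ring
  have htr : A.trace = -(π ^ n * A.det) := by
    rw [h, left_eq_add, mul_eq_zero] at hdet
    exact eq_neg_of_add_eq_zero_left (hdet.resolve_left (pow_ne_zero n hπ))
  rw [htr, dvd_neg]
  exact (dvd_pow_self π (by omega)).mul_right _

theorem modEq_three_of_three_dvd_add {a b c d : R} (h : 3 ∣ a + d) :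
    ModEq 3 !![a, b; c, d] ((b - c - a) • !![-1, 0; 0, 1] + (-c) • !![1, 0; 2, -1] +
      b • !![1, -2; 0, -1]) := by
  obtain ⟨t, ht⟩ := h
  simp only [smul_of, smul_cons, smul_empty, smul_eq_mul, of_add_of, cons_add_cons,
    empty_add_empty, modEq_fin_two_of]
  exact ⟨⟨0, by ring⟩, ⟨b, by ring⟩, ⟨c, by ring⟩, ⟨t, by linear_combination ht⟩⟩

end Matrix

namespace PadicInt

variable {p : ℕ} [Fact p.Prime]

theorem exists_dvd_sub_natCast (z : ℤ_[p]) : ∃ k : ℕ, (p : ℤ_[p]) ∣ z - k := by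
  obtain ⟨k, -, hk⟩ := exists_mem_range z
  rw [maximalIdeal_eq_span_p, Ideal.mem_span_singleton] at hk
  exact ⟨k, hk⟩

theorem toZMod_eq_toZMod_iff_dvd_sub {a b : ℤ_[p]} :
    toZMod a = toZMod b ↔ (p : ℤ_[p]) ∣ a - b := by
  rw [← sub_eq_zero, ← map_sub, ← RingHom.mem_ker, ker_toZMod, maximalIdeal_eq_span_p,
    Ideal.mem_span_singleton]

theorem continuous_toZMod : Continuous (toZMod : ℤ_[p] → ZMod p) := by
  refine ((IsLocallyConstant.iff_eventually_eq _).mpr fun a => ?_).continuous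
  filter_upwards [Metric.ball_mem_nhds a one_pos] with b hb
  rwa [toZMod_eq_toZMod_iff_dvd_sub, ← norm_lt_one_iff_dvd, ← dist_eq_norm]

theorem tendsto_of_forall_pow_dvd_sub {u : ℕ → ℤ_[p]} {a : ℤ_[p]}
    (h : ∀ n, (p : ℤ_[p]) ^ n ∣ u n - a) : Tendsto u atTop (𝓝 a) := by
  have hp : (1 : ℝ) < p := mod_cast (Fact.out : p.Prime).one_lt
  rw [tendsto_iff_norm_sub_tendsto_zero]
  refine squeeze_zero (fun n => norm_nonneg _) (fun n => ?_)
    (tendsto_pow_atTop_nhds_zero_of_lt_one (by positivity) (inv_lt_one_of_one_lt₀ hp))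
  rw [inv_pow, ← zpow_natCast, ← _root_.zpow_neg, norm_le_pow_iff_mem_span_pow,
    Ideal.mem_span_singleton]
  exact h n

end PadicInt

namespace Subgroup

variable {ι R : Type*} [Fintype ι] [DecidableEq ι] [CommRing R]

/-- For `n ≥ 1`, the `E` with `H.HasLift n E`, taken mod 3, form the level-`n` Lie algebra
of `H`. -/
def HasLift (H : Subgroup (SpecialLinearGroup ι R)) (n : ℕ) (E : Matrix ι ι R) : Prop :=
  ∃ u ∈ H, ModEq ((3 : R) ^ (n + 1)) (u : Matrix ι ι R) (1 + (3 : R) ^ n • E)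

namespace HasLift

variable {H : Subgroup (SpecialLinearGroup ι R)} {n : ℕ} {E F : Matrix ι ι R}

theorem of_modEq (h : H.HasLift n E) (hEF : ModEq 3 E F) : H.HasLift n F := by
  obtain ⟨u, hu, hE⟩ := h
  refine ⟨u, hu, hE.trans ?_⟩
  rw [pow_succ]
  exact (hEF.smul _).add_left 1

theorem add (hn : 1 ≤ n) (hE : H.HasLift n E) (hF : H.HasLift n F) : H.HasLift n (E + F) := by
  obtain ⟨u, hu, huE⟩ := hE
  obtain ⟨v, hv, hvF⟩ := hF
  refine ⟨u * v, mul_mem hu hv, ?_⟩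
  rw [Matrix.SpecialLinearGroup.coe_mul]
  refine (huE.mul hvF).trans (modEq_iff_exists_eq_add.mpr ⟨(3 : R) ^ (n - 1) • (E * F), ?_⟩)
  obtain ⟨m, rfl⟩ := Nat.exists_eq_add_of_le hn
  simp only [mul_add, add_mul, one_mul, mul_one, smul_mul_assoc, mul_smul_comm, smul_smul,
    Nat.add_sub_cancel_left]
  match_scalars <;> ring

theorem nsmul (hn : 1 ≤ n) (hE : H.HasLift n E) (k : ℕ) : H.HasLift n (k • E) := by
  induction k with
  | zero => exact ⟨1, one_mem H, by simp [ModEq.refl]⟩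
  | succ k ih => simpa only [succ_nsmul] using ih.add hn hE

theorem conj {g : SpecialLinearGroup ι R} (hg : g ∈ H) (hE : H.HasLift n E) :
    H.HasLift n (g * E * (g⁻¹ : SpecialLinearGroup ι R)) := by
  obtain ⟨u, hu, huE⟩ := hE
  refine ⟨g * u * g⁻¹, mul_mem (mul_mem hg hu) (inv_mem hg), ?_⟩
  have hgg : (g : Matrix ι ι R) * (g⁻¹ : SpecialLinearGroup ι R) = 1 := by
    rw [← Matrix.SpecialLinearGroup.coe_mul, mul_inv_cancel, Matrix.SpecialLinearGroup.coe_one]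
  convert ((ModEq.refl (g : Matrix ι ι R)).mul huE).mul
    (ModEq.refl ((g⁻¹ : SpecialLinearGroup ι R) : Matrix ι ι R)) using 1
  · simp only [Matrix.SpecialLinearGroup.coe_mul]
  · simp only [mul_add, add_mul, mul_one, hgg, mul_smul_comm, smul_mul_assoc]

theorem succ (hn : 1 ≤ n) (hE : H.HasLift n E) : H.HasLift (n + 1) E := by
  obtain ⟨u, hu, huE⟩ := hE
  refine ⟨u ^ 3, pow_mem hu 3, ?_⟩
  obtain ⟨m, rfl⟩ := Nat.exists_eq_add_of_le hn
  obtain ⟨C, hC⟩ := modEq_iff_exists_eq_add.mp huE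
  set G := E + (3 : R) • C
  have hu' : (u : Matrix ι ι R) = 1 + (3 : R) ^ (1 + m) • G := by
    rw [hC]; match_scalars <;> ring
  rw [Matrix.SpecialLinearGroup.coe_pow, hu', modEq_iff_exists_eq_add]
  -- `(1 + 3ⁿG)³ = 1 + 3ⁿ⁺¹G + 3²ⁿ⁺¹G² + 3³ⁿG³`; as `n ≥ 1`, the last two terms vanish mod `3ⁿ⁺²`
  refine ⟨C + (3 : R) ^ m • (G * G) + (3 : R) ^ (2 * m) • (G * G * G), ?_⟩
  simp only [pow_succ, pow_zero, one_mul, mul_add, add_mul, mul_one, smul_mul_assoc,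
    mul_smul_comm, mul_assoc]
  match_scalars <;> ring

theorem of_le {m : ℕ} (hm : 1 ≤ m) (hmn : m ≤ n) (hE : H.HasLift m E) : H.HasLift n E := by
  induction n, hmn using Nat.le_induction with
  | base => exact hE
  | succ n hmn ih => exact ih.succ (hm.trans hmn)

end HasLift

namespace HasLift

variable {H : Subgroup (SpecialLinearGroup ι ℤ_[3])} {n : ℕ} {E : Matrix ι ι ℤ_[3]}

theorem smul (hn : 1 ≤ n) (hE : H.HasLift n E) (a : ℤ_[3]) : H.HasLift n (a • E) := by
  obtain ⟨k, hk⟩ := PadicInt.exists_dvd_sub_natCast a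
  refine (hE.nsmul hn k).of_modEq fun i j => ?_
  simpa [← sub_mul] using hk.neg_right.mul_right (E i j)

theorem of_three_dvd_trace {H : Subgroup SL(2, ℤ_[3])} (hn : 1 ≤ n)
    (h₀ : H.HasLift n !![-1, 0; 0, 1]) (h₁ : H.HasLift n !![1, 0; 2, -1])
    (h₂ : H.HasLift n !![1, -2; 0, -1]) {A : Matrix (Fin 2) (Fin 2) ℤ_[3]} (hA : 3 ∣ A.trace) :
    H.HasLift n A := by
  rw [trace_fin_two] at hA
  rw [eta_fin_two A]
  exact (((h₀.smul hn _).add hn (h₁.smul hn _)).add hn (h₂.smul hn _)).of_modEq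
    (modEq_three_of_three_dvd_add hA).symm

end HasLift

end Subgroup

namespace Matrix.SpecialLinearGroup

variable {n : Type*} [Fintype n] [DecidableEq n]

theorem exists_mem_modEq_pow_of_hasLift {R : Type*} [CommRing R] [IsDomain R]
    {H : Subgroup SL(2, R)} (h3 : (3 : R) ≠ 0)
    (hH : ∀ n, 1 ≤ n → ∀ A : Matrix (Fin 2) (Fin 2) R, 3 ∣ A.trace → H.HasLift n A)
    {g : SL(2, R)} (hg : ModEq 3 (g : Matrix (Fin 2) (Fin 2) R) 1) (n : ℕ) :
    ∃ h ∈ H, ModEq ((3 : R) ^ n) (h : Matrix (Fin 2) (Fin 2) R) g := by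
  suffices ∀ n, 1 ≤ n → ∃ h ∈ H, ModEq ((3 : R) ^ n) (h : Matrix (Fin 2) (Fin 2) R) g by
    obtain ⟨h, hhH, hhg⟩ := this (n + 1) (by omega)
    exact ⟨h, hhH, hhg.of_dvd (pow_dvd_pow 3 n.le_succ)⟩
  intro n hn
  induction n, hn using Nat.le_induction with
  | base => exact ⟨1, one_mem H, by simpa using hg.symm⟩
  | succ n hn ih =>
    obtain ⟨h, hhH, hhg⟩ := ih
    -- `h⁻¹ g = 1 + 3ⁿA` has determinant one, which forces `3 ∣ tr A`; a lift of `A` corrects `h`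
    have hr : ModEq ((3 : R) ^ n) ((h⁻¹ * g : SL(2, R)) : Matrix (Fin 2) (Fin 2) R) 1 := by
      convert (ModEq.refl ((h⁻¹ : SL(2, R)) : Matrix (Fin 2) (Fin 2) R)).mul hhg.symm using 1
      · rw [coe_mul]
      · rw [← coe_mul, inv_mul_cancel, coe_one]
    obtain ⟨A, hA⟩ := modEq_iff_exists_eq_add.mp hr
    have htr : 3 ∣ A.trace :=
      dvd_trace_of_det_one_add_pow_smul_eq_one h3 hn (hA ▸ (h⁻¹ * g).prop)
    obtain ⟨s, hs, hsA⟩ := hH n hn A htr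
    refine ⟨h * s, mul_mem hhH hs, ?_⟩
    convert (ModEq.refl (h : Matrix (Fin 2) (Fin 2) R)).mul hsA using 1
    · rw [coe_mul]
    · rw [← hA, ← coe_mul, mul_inv_cancel_left]

theorem continuous_map {R S : Type*} [CommRing R] [CommRing S] [TopologicalSpace R]
    [TopologicalSpace S] {f : R →+* S} (hf : Continuous f) : Continuous (map (n := n) f) :=
  continuous_induced_rng.2 (continuous_subtype_val.matrix_map hf)

instance {R : Type*} [CommRing R] [TopologicalSpace R] [DiscreteTopology R] :
    DiscreteTopology (SpecialLinearGroup n R) :=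
  inferInstanceAs (DiscreteTopology {A : Matrix n n R // A.det = 1})

theorem map_surjective {R S : Type*} [CommRing R] [CommRing S] (f : R →+* S) [IsLocalHom f]
    (hf : Function.Surjective f) : Function.Surjective (map (n := n) f) := by
  intro M
  rcases isEmpty_or_nonempty n with hn | ⟨⟨i⟩⟩
  · exact ⟨1, Subsingleton.elim _ _⟩
  set N := (M : Matrix n n S).map (Function.surjInv hf)
  have hN : N.map f = M := by ext; simp [N, Function.surjInv_eq hf]
  have hdet : f N.det = 1 := by rw [RingHom.map_det, RingHom.mapMatrix_apply, hN, M.prop]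
  obtain ⟨u, hu⟩ := isUnit_of_map_unit f _ (hdet ▸ isUnit_one)
  have hu' : f ↑u⁻¹ = 1 := by
    have := congrArg f u.inv_mul
    rwa [map_mul, hu, hdet, mul_one, map_one] at this
  refine ⟨⟨N * diagonal (Pi.mulSingle i (↑u⁻¹ : R)), ?_⟩, Subtype.ext ?_⟩
  · rw [det_mul, det_diagonal, Fintype.prod_pi_mulSingle', ← hu, Units.mul_inv]
  · have hd : (fun j => f ((Pi.mulSingle i (↑u⁻¹ : R) : n → R) j)) = fun _ => 1 := by
      funext j
      by_cases hj : j = i <;> simp [hj, hu']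
    change (N * _).map f = _
    rw [Matrix.map_mul, hN, diagonal_map (map_zero f), hd, diagonal_one, mul_one]

section Padic

variable {p : ℕ} [Fact p.Prime]

theorem map_toZMod_eq_map_toZMod_iff {g g' : SpecialLinearGroup n ℤ_[p]} :
    map (PadicInt.toZMod : ℤ_[p] →+* ZMod p) g = map PadicInt.toZMod g' ↔
      ModEq (p : ℤ_[p]) (g : Matrix n n ℤ_[p]) g' := by
  simp_rw [ext_iff, map_apply_coe, RingHom.mapMatrix_apply, map_apply,
    PadicInt.toZMod_eq_toZMod_iff_dvd_sub, ModEq]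

theorem isClosed_comap_map_toZMod (K : Subgroup (SpecialLinearGroup n (ZMod p))) :
    IsClosed (K.comap (map (PadicInt.toZMod : ℤ_[p] →+* ZMod p)) :
      Set (SpecialLinearGroup n ℤ_[p])) :=
  (isClosed_discrete (K : Set (SpecialLinearGroup n (ZMod p)))).preimage
    (continuous_map PadicInt.continuous_toZMod)

theorem mem_closure_of_forall_modEq {S : Set (SpecialLinearGroup n ℤ_[p])}
    {g : SpecialLinearGroup n ℤ_[p]}
    (h : ∀ k, ∃ s ∈ S, ModEq ((p : ℤ_[p]) ^ k) (s : Matrix n n ℤ_[p]) g) : g ∈ closure S := by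
  choose s hsS hsg using h
  refine mem_closure_of_tendsto (f := s) (b := atTop) ?_ (Eventually.of_forall hsS)
  refine (IsInducing.tendsto_nhds_iff
    (g := ((↑) : SpecialLinearGroup n ℤ_[p] → Matrix n n ℤ_[p])) ⟨rfl⟩).mpr ?_
  exact tendsto_pi_nhds.mpr fun i => tendsto_pi_nhds.mpr fun j =>
    PadicInt.tendsto_of_forall_pow_dvd_sub fun k => hsg k i j

end Padic

end Matrix.SpecialLinearGroup

theorem Subgroup.ker_le_topologicalClosure_of_hasLift {H : Subgroup SL(2, ℤ_[3])}
    (hH : ∀ n, 1 ≤ n → ∀ A : Matrix (Fin 2) (Fin 2) ℤ_[3], 3 ∣ A.trace → H.HasLift n A) :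
    (SpecialLinearGroup.map (PadicInt.toZMod : ℤ_[3] →+* ZMod 3)).ker ≤ H.topologicalClosure := by
  intro g hg
  have hg₁ : ModEq 3 (g : Matrix (Fin 2) (Fin 2) ℤ_[3]) 1 := by
    simpa using SpecialLinearGroup.map_toZMod_eq_map_toZMod_iff.mp (hg.trans (map_one _).symm)
  exact SpecialLinearGroup.mem_closure_of_forall_modEq
    (by simpa using SpecialLinearGroup.exists_mem_modEq_pow_of_hasLift (by norm_num) hH hg₁)

theorem Subgroup.index_comap_map_toZMod_of_card_eq_three {K : Subgroup SL(2, ZMod 3)}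
    (hK : Nat.card K = 3) :
    (K.comap (SpecialLinearGroup.map (PadicInt.toZMod : ℤ_[3] →+* ZMod 3))).index = 8 := by
  have := IsLocalHom.of_surjective _ (ZMod.ringHom_surjective (PadicInt.toZMod : ℤ_[3] →+* ZMod 3))
  rw [index_comap_of_surjective _ (SpecialLinearGroup.map_surjective _ (ZMod.ringHom_surjective _))]
  have hcard : Nat.card SL(2, ZMod 3) = 24 := by rw [Nat.card_eq_fintype_card]; decide
  have := K.card_mul_index
  rw [hK, hcard] at this
  omega

theorem nine_dvd_sub_four_of_sq_eq_neg_two {R : Type*} [CommRing R] [IsDomain R]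
    (h3 : (3 : R) ≠ 0) {α h : R} (hα2 : α ^ 2 = -2) (hα1 : 3 ∣ α - 1) (hh : 2 * h = 1) :
    9 ∣ α - 4 := by
  obtain ⟨t, ht⟩ := hα1
  have h2t : 2 * t + 3 * t ^ 2 = -1 :=
    mul_left_cancel₀ h3 (by linear_combination hα2 - (α + 1 + 3 * t) * ht)
  exact ⟨-h * (1 + t ^ 2), by linear_combination ht + 3 * h * h2t - 3 * (t - 1) * hh⟩

section

open Subgroup

variable {α h : ℤ_[3]} {x y : SL(2, ℤ_[3])}

theorem coe_inv_of_coe_eq (hx : (x : Matrix (Fin 2) (Fin 2) ℤ_[3]) = !![0, -1; 1, -1]) :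
    ((x⁻¹ : SL(2, ℤ_[3])) : Matrix (Fin 2) (Fin 2) ℤ_[3]) = !![-1, 1; -1, 0] := by
  rw [Matrix.SpecialLinearGroup.coe_inv, hx, adjugate_fin_two]
  simp

theorem pow_three_of_coe_eq (hx : (x : Matrix (Fin 2) (Fin 2) ℤ_[3]) = !![0, -1; 1, -1]) :
    x ^ 3 = 1 := by
  ext i j
  rw [Matrix.SpecialLinearGroup.coe_pow, hx]
  fin_cases i <;> fin_cases j <;> simp [pow_succ, mul_apply, Fin.sum_univ_two]

theorem orderOf_map_toZMod_of_coe_eq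
    (hx : (x : Matrix (Fin 2) (Fin 2) ℤ_[3]) = !![0, -1; 1, -1]) :
    orderOf (SpecialLinearGroup.map (PadicInt.toZMod : ℤ_[3] →+* ZMod 3) x) = 3 := by
  refine orderOf_eq_prime (by rw [← map_pow, pow_three_of_coe_eq hx, map_one]) fun h1 => ?_
  have h00 := congrArg (fun g : SL(2, ZMod 3) => g 0 0) h1
  simp [hx] at h00

theorem map_toZMod_eq_of_coe_eq (hα1 : 3 ∣ α - 1) (hh : 2 * h = 1)
    (hx : (x : Matrix (Fin 2) (Fin 2) ℤ_[3]) = !![0, -1; 1, -1])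
    (hy : (y : Matrix (Fin 2) (Fin 2) ℤ_[3]) = α • !![0, h; 1, -1]) :
    SpecialLinearGroup.map (PadicInt.toZMod : ℤ_[3] →+* ZMod 3) y =
      SpecialLinearGroup.map PadicInt.toZMod x := by
  obtain ⟨t, ht⟩ := hα1
  rw [SpecialLinearGroup.map_toZMod_eq_map_toZMod_iff, hx, hy]
  simp only [smul_of, smul_cons, smul_empty, smul_eq_mul, modEq_fin_two_of, Nat.cast_ofNat]
  exact ⟨⟨0, by ring⟩, ⟨t * h + h, by linear_combination h * ht - hh⟩,
    ⟨t, by linear_combination ht⟩, ⟨-t, by linear_combination -ht⟩⟩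

theorem hasLift_one_of_mem {H : Subgroup SL(2, ℤ_[3])} (hα2 : α ^ 2 = -2) (hα1 : 3 ∣ α - 1)
    (hh : 2 * h = 1) (hx : (x : Matrix (Fin 2) (Fin 2) ℤ_[3]) = !![0, -1; 1, -1])
    (hy : (y : Matrix (Fin 2) (Fin 2) ℤ_[3]) = α • !![0, h; 1, -1]) (hxH : x ∈ H) (hyH : y ∈ H) :
    H.HasLift 1 !![-1, 0; 0, 1] := by
  obtain ⟨a, ha⟩ := nine_dvd_sub_four_of_sq_eq_neg_two (by norm_num) hα2 hα1 hh
  -- `y x⁻¹ = diag(-αh, α) ≡ diag(-2, 4) (mod 9)`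
  refine ⟨y * x⁻¹, mul_mem hyH (inv_mem hxH), ?_⟩
  rw [Matrix.SpecialLinearGroup.coe_mul, hy, coe_inv_of_coe_eq hx, one_fin_two]
  simp only [smul_of, smul_cons, smul_empty, smul_eq_mul, mul_fin_two, of_add_of, cons_add_cons,
    empty_add_empty, modEq_fin_two_of]
  exact ⟨⟨-h * a, by linear_combination -h * ha - 2 * hh⟩, ⟨0, by ring⟩, ⟨0, by ring⟩,
    ⟨a, by linear_combination ha⟩⟩

theorem hasLift_of_mem {H : Subgroup SL(2, ℤ_[3])} (hα2 : α ^ 2 = -2) (hα1 : 3 ∣ α - 1)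
    (hh : 2 * h = 1) (hx : (x : Matrix (Fin 2) (Fin 2) ℤ_[3]) = !![0, -1; 1, -1])
    (hy : (y : Matrix (Fin 2) (Fin 2) ℤ_[3]) = α • !![0, h; 1, -1]) (hxH : x ∈ H) (hyH : y ∈ H)
    {n : ℕ} (hn : 1 ≤ n) {A : Matrix (Fin 2) (Fin 2) ℤ_[3]} (hA : 3 ∣ A.trace) :
    H.HasLift n A := by
  have h₀ := hasLift_one_of_mem hα2 hα1 hh hx hy hxH hyH
  have h₁ : H.HasLift 1 !![1, 0; 2, -1] := by
    convert h₀.conj hxH using 2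
    rw [hx, coe_inv_of_coe_eq hx]
    norm_num [mul_fin_two]
  have h₂ : H.HasLift 1 !![1, -2; 0, -1] := by
    convert h₀.conj (inv_mem hxH) using 2
    rw [inv_inv, hx, coe_inv_of_coe_eq hx]
    norm_num [mul_fin_two]
  exact HasLift.of_three_dvd_trace hn (h₀.of_le le_rfl hn) (h₁.of_le le_rfl hn)
    (h₂.of_le le_rfl hn) hA

end

open Subgroup in
/-- The closed subgroup `P` of `SL₂(ℤ₃)` generated by `x` and `y` equals the
preimage, under reduction mod 3, of the cyclic subgroup of order 3 generated by the image of
`x`; in particular `P` is a closed subgroup of index 8 (a Sylow pro-3 subgroup). -/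
theorem stmt_1 (α h : ℤ_[3]) (hα2 : α ^ 2 = -2) (hα1 : (3 : ℤ_[3]) ∣ (α - 1)) (hh : 2 * h = 1)
    (x y : SL(2, ℤ_[3]))
    (hx : (x : Matrix (Fin 2) (Fin 2) ℤ_[3]) = !![0, -1; 1, -1])
    (hy : (y : Matrix (Fin 2) (Fin 2) ℤ_[3]) = α • !![0, h; 1, -1])
    (P : Subgroup SL(2, ℤ_[3])) (hP : P = (Subgroup.closure {x, y}).topologicalClosure) :
    P = Subgroup.comap
        (SpecialLinearGroup.map (PadicInt.toZMod : ℤ_[3] →+* ZMod 3))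
        (Subgroup.zpowers (SpecialLinearGroup.map (PadicInt.toZMod : ℤ_[3] →+* ZMod 3) x)) ∧
    Nat.card (Subgroup.zpowers (SpecialLinearGroup.map (PadicInt.toZMod : ℤ_[3] →+* ZMod 3) x)) = 3 ∧
    IsClosed (P : Set SL(2, ℤ_[3])) ∧
    P.index = 8 := by
  set φ := SpecialLinearGroup.map (n := Fin 2) (PadicInt.toZMod : ℤ_[3] →+* ZMod 3)
  have hxH : x ∈ Subgroup.closure {x, y} := subset_closure (by simp)
  have hyH : y ∈ Subgroup.closure {x, y} := subset_closure (by simp)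
  have hcard : Nat.card (zpowers (φ x)) = 3 := by
    rw [Nat.card_zpowers, orderOf_map_toZMod_of_coe_eq hx]
  have hPQ : P ≤ comap φ (zpowers (φ x)) := by
    rw [hP]
    refine topologicalClosure_minimal _ ((closure_le _).mpr ?_)
      (SpecialLinearGroup.isClosed_comap_map_toZMod _)
    rintro g (rfl | rfl)
    · exact mem_zpowers _
    · exact (map_toZMod_eq_of_coe_eq hα1 hh hx hy).symm ▸ mem_zpowers (φ x)
  have hQP : comap φ (zpowers (φ x)) ≤ P := by
    intro g hg
    obtain ⟨m, hm⟩ := mem_zpowers_iff.mp hg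
    have hker : x ^ (-m) * g ∈ φ.ker := by
      rw [MonoidHom.mem_ker, map_mul, map_zpow, ← hm, _root_.zpow_neg, inv_mul_cancel]
    have hxP : x ∈ P := hP ▸ le_topologicalClosure _ hxH
    have := hP ▸ ker_le_topologicalClosure_of_hasLift
      (fun n hn A hA => hasLift_of_mem hα2 hα1 hh hx hy hxH hyH hn hA) hker
    simpa using mul_mem (zpow_mem hxP m) this
  have hPQ' := le_antisymm hPQ hQP
  exact ⟨hPQ', hcard, hP ▸ isClosed_topologicalClosure _,
    hPQ' ▸ index_comap_map_toZMod_of_card_eq_three hcard⟩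

end
end

section
/- The closed subgroup of SL₂(ℤ₃) generated by the three matrices z₀, z₁, z₂ equals the first congruence kernel N₁ (the group of matrices congruent to the identity modulo 3). -/
open Matrix MatrixGroups

noncomputable section

/-!
The generators satisfy `zᵢ ≡ 1 + 3 mᵢ (mod 9)` (because `α ≡ 4` and `h ≡ 5` modulo 9), where
`m₀, m₁, m₂` span the trace-zero matrices modulo 3. Since `(1 + 3ᵏ M)³ ≡ 1 + 3ᵏ⁺¹ M (mod 3ᵏ⁺²)`
for `k ≥ 1`, cubing carries these generators down the filtration, so the group `H` they generate
maps onto every quotient `N_k / N_{k+1}`; by the determinant condition, that quotient consists of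
the trace-zero matrices modulo 3. Hence every element of `N₁` is a 3-adic limit of elements of `H`.
Conversely `N₁` is closed and contains the `zᵢ`.
-/

def AlgModEq {R A : Type*} [CommRing R] [Ring A] [Algebra R A] (r : R) (a b : A) : Prop :=
  ∃ e : A, a = b + r • e

namespace AlgModEq

variable {R A : Type*} [CommRing R] [Ring A] [Algebra R A] {r s : R} {a b c d : A}

protected theorem refl (a : A) : AlgModEq r a a := ⟨0, by simp⟩

protected theorem symm (h : AlgModEq r a b) : AlgModEq r b a := by
  obtain ⟨e, rfl⟩ := h
  exact ⟨-e, by simp⟩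

protected theorem trans (h₁ : AlgModEq r a b) (h₂ : AlgModEq r b c) : AlgModEq r a c := by
  obtain ⟨e, rfl⟩ := h₁
  obtain ⟨f, rfl⟩ := h₂
  exact ⟨f + e, by rw [smul_add, add_assoc]⟩

instance : @Trans A A A (AlgModEq r) (AlgModEq r) (AlgModEq r) := ⟨AlgModEq.trans⟩

protected theorem mul (h₁ : AlgModEq r a b) (h₂ : AlgModEq r c d) :
    AlgModEq r (a * c) (b * d) := by
  obtain ⟨e, rfl⟩ := h₁
  obtain ⟨f, rfl⟩ := h₂
  refine ⟨e * d + b * f + r • (e * f), ?_⟩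
  simp only [add_mul, mul_add, smul_mul_assoc, mul_smul_comm, smul_add, smul_smul]
  abel

theorem of_dvd (hrs : r ∣ s) (h : AlgModEq s a b) : AlgModEq r a b := by
  obtain ⟨t, rfl⟩ := hrs
  obtain ⟨e, rfl⟩ := h
  exact ⟨t • e, by rw [smul_smul]⟩

theorem add_smul_left (a e : A) : AlgModEq r (a + r • e) a := ⟨e, rfl⟩

end AlgModEq

section

variable {R A : Type*} [CommRing R] [Ring A] [Algebra R A]

theorem algModEq_one_add_smul_mul_one_add_smul (r : R) (a b : A) :
    AlgModEq (r ^ 2) ((1 + r • a) * (1 + r • b)) (1 + r • (a + b)) :=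
  ⟨a * b, by simp only [add_mul, mul_add, one_mul, mul_one, smul_mul_assoc, mul_smul_comm,
    smul_smul, smul_add, sq]; abel⟩

theorem algModEq_one_add_smul_pow_three (k : ℕ) (a : A) :
    AlgModEq ((3 : R) ^ (k + 3)) ((1 + (3 : R) ^ (k + 1) • a) ^ 3) (1 + (3 : R) ^ (k + 2) • a) := by
  refine ⟨(3 : R) ^ k • a ^ 2 + (3 : R) ^ (2 * k) • a ^ 3, ?_⟩
  simp only [pow_succ, pow_zero, one_mul, mul_add, add_mul, mul_one, smul_mul_assoc,
    mul_smul_comm, smul_smul, smul_add]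
  module

end

namespace Matrix

variable {n R : Type*} [Fintype n] [DecidableEq n] [CommRing R]

theorem algModEq_iff {r : R} {A B : Matrix n n R} :
    AlgModEq r A B ↔ ∀ i j, r ∣ A i j - B i j := by
  constructor
  · rintro ⟨E, rfl⟩ i j
    exact ⟨E i j, by simp⟩
  · intro h
    choose E hE using h
    exact ⟨of E, by ext i j; simp [← hE i j]⟩

theorem dvd_trace_of_det_one_add_smul [IsDomain R] {r : R} (hr : r ≠ 0) {M : Matrix n n R}
    (hM : (1 + r • M).det = 1) : r ∣ M.trace := by
  rw [det_one_add_smul] at hM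
  refine ⟨-(det (1 + (Polynomial.X : Polynomial R) • M.map Polynomial.C)).divX.divX.eval r, ?_⟩
  apply mul_left_cancel₀ hr
  linear_combination hM

end Matrix

open Filter Topology

namespace PadicInt

variable {p : ℕ} [Fact p.Prime]

theorem pow_dvd_iff_norm_le (k : ℕ) (x : ℤ_[p]) :
    (p : ℤ_[p]) ^ k ∣ x ↔ ‖x‖ ≤ (p : ℝ)⁻¹ ^ k := by
  rw [← Ideal.mem_span_singleton, ← norm_le_pow_iff_mem_span_pow, _root_.zpow_neg, zpow_natCast,
    inv_pow]

theorem pow_dvd_iff_toZModPow_eq_zero (k : ℕ) (x : ℤ_[p]) :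
    (p : ℤ_[p]) ^ k ∣ x ↔ toZModPow k x = 0 := by
  rw [← RingHom.mem_ker, ker_toZModPow, Ideal.mem_span_singleton]

theorem tendsto_of_pow_dvd_sub {u : ℕ → ℤ_[p]} {a : ℤ_[p]}
    (h : ∀ k, (p : ℤ_[p]) ^ k ∣ u k - a) : Tendsto u atTop (𝓝 a) := by
  rw [← tendsto_sub_nhds_zero_iff]
  refine squeeze_zero_norm (fun k => (pow_dvd_iff_norm_le k _).1 (h k)) ?_
  exact tendsto_pow_atTop_nhds_zero_of_lt_one (by positivity)
    (inv_lt_one_of_one_lt₀ (mod_cast (Fact.out : p.Prime).one_lt))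

theorem isClosed_setOf_pow_dvd (k : ℕ) : IsClosed {x : ℤ_[p] | (p : ℤ_[p]) ^ k ∣ x} := by
  simp only [pow_dvd_iff_norm_le]
  exact isClosed_le continuous_norm continuous_const

end PadicInt

namespace Matrix.SpecialLinearGroup

variable {p : ℕ} [Fact p.Prime] {n : Type*} [Fintype n] [DecidableEq n]

theorem tendsto_of_algModEq {v : ℕ → SpecialLinearGroup n ℤ_[p]} {A : SpecialLinearGroup n ℤ_[p]}
    (h : ∀ k, AlgModEq ((p : ℤ_[p]) ^ k) (v k : Matrix n n ℤ_[p]) A) :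
    Tendsto v atTop (𝓝 A) := by
  refine tendsto_subtype_rng.2 (tendsto_pi_nhds.2 fun i => tendsto_pi_nhds.2 fun j => ?_)
  exact PadicInt.tendsto_of_pow_dvd_sub fun k => algModEq_iff.1 (h k) i j

theorem isClosed_setOf_algModEq (k : ℕ) (B : Matrix n n ℤ_[p]) :
    IsClosed {A : SpecialLinearGroup n ℤ_[p] |
      AlgModEq ((p : ℤ_[p]) ^ k) (A : Matrix n n ℤ_[p]) B} := by
  simp only [algModEq_iff, Set.ofPred_forall]
  refine isClosed_iInter fun i => isClosed_iInter fun j => ?_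
  exact (PadicInt.isClosed_setOf_pow_dvd k).preimage
    ((continuous_subtype_val.matrix_elem i j).sub continuous_const)

end Matrix.SpecialLinearGroup

namespace Subgroup

variable {p : ℕ} [Fact p.Prime] {n : Type*} [Fintype n] [DecidableEq n]
  (H : Subgroup (SpecialLinearGroup n ℤ_[p]))

def layerAddSubmonoid (k : ℕ) : AddSubmonoid (Matrix n n ℤ_[p]) where
  carrier := {M | ∃ g ∈ H,
    AlgModEq ((p : ℤ_[p]) ^ (k + 2)) (g : Matrix n n ℤ_[p]) (1 + (p : ℤ_[p]) ^ (k + 1) • M)}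
  zero_mem' := ⟨1, H.one_mem, by simp [AlgModEq.refl]⟩
  add_mem' := by
    rintro M M' ⟨g, hg, hgM⟩ ⟨g', hg', hgM'⟩
    refine ⟨g * g', H.mul_mem hg hg', ?_⟩
    rw [Matrix.SpecialLinearGroup.coe_mul]
    refine (hgM.mul hgM').trans ((algModEq_one_add_smul_mul_one_add_smul _ M M').of_dvd ?_)
    rw [← pow_mul]
    exact pow_dvd_pow _ (by omega)

theorem prime_smul_mem_layerAddSubmonoid (k : ℕ) (E : Matrix n n ℤ_[p]) :
    (p : ℤ_[p]) • E ∈ H.layerAddSubmonoid k :=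
  ⟨1, H.one_mem, ⟨-E, by simp [smul_smul, ← pow_succ]⟩⟩

/-- Modulo `p`, `H.layer k` is the image of `H ∩ N_{k+1}` in `N_{k+1} / N_{k+2}`, where `N_j` is
the kernel of reduction modulo `p ^ j`. -/
def layer (k : ℕ) : Submodule ℤ_[p] (Matrix n n ℤ_[p]) where
  __ := H.layerAddSubmonoid k
  smul_mem' c M hM := by
    obtain ⟨m, -, hm⟩ := PadicInt.exists_mem_range c
    rw [PadicInt.maximalIdeal_eq_span_p, Ideal.mem_span_singleton] at hm
    obtain ⟨t, ht⟩ := hm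
    have hc : c • M = m • M + (p : ℤ_[p]) • (t • M) := by
      rw [smul_smul, ← Nat.cast_smul_eq_nsmul ℤ_[p], ← add_smul, ← ht, add_sub_cancel]
    rw [hc]
    exact add_mem (AddSubmonoid.nsmul_mem _ hM m) (H.prime_smul_mem_layerAddSubmonoid k _)

end Subgroup

namespace Subgroup

variable {n : Type*} [Fintype n] [DecidableEq n] {H : Subgroup (SpecialLinearGroup n ℤ_[3])}

theorem mem_layer_iff {k : ℕ} {M : Matrix n n ℤ_[3]} : M ∈ H.layer k ↔
    ∃ g ∈ H, AlgModEq ((3 : ℤ_[3]) ^ (k + 2)) (g : Matrix n n ℤ_[3])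
      (1 + (3 : ℤ_[3]) ^ (k + 1) • M) := by
  simp only [layer, layerAddSubmonoid, Nat.cast_ofNat]; rfl

theorem layer_le_layer_succ (k : ℕ) : H.layer k ≤ H.layer (k + 1) := by
  intro M hM
  obtain ⟨g, hg, E, hgE⟩ := mem_layer_iff.1 hM
  have hg' : (g : Matrix n n ℤ_[3]) = 1 + (3 : ℤ_[3]) ^ (k + 1) • (M + (3 : ℤ_[3]) • E) := by
    rw [hgE]; module
  refine mem_layer_iff.2 ⟨g ^ 3, H.pow_mem hg 3, ?_⟩
  rw [Matrix.SpecialLinearGroup.coe_pow, hg']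
  exact (algModEq_one_add_smul_pow_three k _).trans ⟨E, by module⟩

theorem layer_mono : Monotone H.layer := monotone_nat_of_le_succ layer_le_layer_succ

theorem exists_mem_algModEq_of_algModEq_one
    (hH : ∀ M : Matrix n n ℤ_[3], (3 : ℤ_[3]) ∣ M.trace → M ∈ H.layer 0)
    {k : ℕ} {B : SpecialLinearGroup n ℤ_[3]}
    (hB : AlgModEq ((3 : ℤ_[3]) ^ (k + 1)) (B : Matrix n n ℤ_[3]) 1) :
    ∃ g ∈ H, AlgModEq ((3 : ℤ_[3]) ^ (k + 2)) (g : Matrix n n ℤ_[3]) B := by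
  obtain ⟨M, hBM⟩ := hB
  have htrace : (3 : ℤ_[3]) ∣ M.trace :=
    (dvd_pow_self 3 k.succ_ne_zero).trans
      (Matrix.dvd_trace_of_det_one_add_smul (pow_ne_zero _ (by norm_num)) (hBM ▸ B.prop))
  obtain ⟨g, hg, hgM⟩ := mem_layer_iff.1 (layer_mono k.zero_le (hH M htrace))
  exact ⟨g, hg, hBM ▸ hgM⟩

theorem exists_mem_algModEq_pow_succ
    (hH : ∀ M : Matrix n n ℤ_[3], (3 : ℤ_[3]) ∣ M.trace → M ∈ H.layer 0)
    {A : SpecialLinearGroup n ℤ_[3]}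
    (hA : AlgModEq (3 : ℤ_[3]) (A : Matrix n n ℤ_[3]) 1) (k : ℕ) :
    ∃ v ∈ H, AlgModEq ((3 : ℤ_[3]) ^ (k + 1)) (v : Matrix n n ℤ_[3]) A := by
  induction k with
  | zero => exact ⟨1, H.one_mem, by simpa using hA.symm⟩
  | succ k ih =>
    obtain ⟨v, hv, hvA⟩ := ih
    have hB : AlgModEq ((3 : ℤ_[3]) ^ (k + 1))
        ((v⁻¹ * A : SpecialLinearGroup n ℤ_[3]) : Matrix n n ℤ_[3]) 1 := by
      rw [Matrix.SpecialLinearGroup.coe_mul]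
      calc AlgModEq ((3 : ℤ_[3]) ^ (k + 1)) _
            ((v⁻¹ : SpecialLinearGroup n ℤ_[3]) * (v : Matrix n n ℤ_[3])) :=
          (AlgModEq.refl _).mul hvA.symm
        _ = 1 := by rw [← Matrix.SpecialLinearGroup.coe_mul, inv_mul_cancel,
            Matrix.SpecialLinearGroup.coe_one]
    obtain ⟨g, hg, hgB⟩ := exists_mem_algModEq_of_algModEq_one hH hB
    refine ⟨v * g, H.mul_mem hv hg, ?_⟩
    calc _ = (v : Matrix n n ℤ_[3]) * g := Matrix.SpecialLinearGroup.coe_mul v g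
      AlgModEq ((3 : ℤ_[3]) ^ (k + 2)) _ ((v : Matrix n n ℤ_[3]) * ↑(v⁻¹ * A)) :=
          (AlgModEq.refl _).mul hgB
      _ = A := by rw [← Matrix.SpecialLinearGroup.coe_mul, mul_inv_cancel_left]

theorem mem_topologicalClosure_of_algModEq_one
    (hH : ∀ M : Matrix n n ℤ_[3], (3 : ℤ_[3]) ∣ M.trace → M ∈ H.layer 0)
    {A : SpecialLinearGroup n ℤ_[3]}
    (hA : AlgModEq (3 : ℤ_[3]) (A : Matrix n n ℤ_[3]) 1) : A ∈ H.topologicalClosure := by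
  choose v hvH hv using exists_mem_algModEq_pow_succ hH hA
  refine mem_closure_of_tendsto
    (Matrix.SpecialLinearGroup.tendsto_of_algModEq fun k => ?_) (Eventually.of_forall hvH)
  simpa using (hv k).of_dvd (pow_dvd_pow 3 k.le_succ)

end Subgroup

theorem Submodule.mem_of_three_dvd_trace {S : Submodule ℤ_[3] (Matrix (Fin 2) (Fin 2) ℤ_[3])}
    (h3 : ∀ E, (3 : ℤ_[3]) • E ∈ S) (h₀ : !![2, 0; 0, 1] ∈ S) (h₁ : !![1, 1; 0, 2] ∈ S)
    (h₂ : !![1, 0; 2, 2] ∈ S) {M : Matrix (Fin 2) (Fin 2) ℤ_[3]} (hM : (3 : ℤ_[3]) ∣ M.trace) :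
    M ∈ S := by
  obtain ⟨t, ht⟩ := hM
  have hd : M 1 1 = 3 * t - M 0 0 := by rw [← ht, Matrix.trace_fin_two]; ring
  set a := M 0 0
  set b := M 0 1
  set c := M 1 0
  have hM : M = (2 * a + b + 2 * c) • !![2, 0; 0, 1] + b • !![1, 1; 0, 2] + (2 * c) • !![1, 0; 2, 2]
      + (3 : ℤ_[3]) • !![-a - b - 2 * c, 0; -c, t - a - b - 2 * c] := by
    ext i j
    fin_cases i <;> fin_cases j <;> simp [a, b, c, hd] <;> ring
  rw [hM]
  exact add_mem (add_mem (add_mem (S.smul_mem _ h₀) (S.smul_mem _ h₁)) (S.smul_mem _ h₂)) (h3 _)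

theorem toZModPow_two_of_sq_eq_neg_two {α : ℤ_[3]} (hα2 : α ^ 2 = -2) (hα1 : (3 : ℤ_[3]) ∣ α - 1) :
    PadicInt.toZModPow 2 α = 4 := by
  obtain ⟨t, ht⟩ := hα1
  have hsq := congrArg (PadicInt.toZModPow 2) hα2
  have hmod := congrArg (PadicInt.toZModPow 2) ht
  simp only [map_pow, map_neg, map_ofNat, map_sub, map_one, map_mul] at hsq hmod
  generalize PadicInt.toZModPow 2 α = a at *
  generalize PadicInt.toZModPow 2 t = b at *
  revert a b
  decide

theorem toZModPow_two_of_two_mul_eq_one {h : ℤ_[3]} (hh : 2 * h = 1) :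
    PadicInt.toZModPow 2 h = 5 := by
  have hmod := congrArg (PadicInt.toZModPow 2) hh
  simp only [map_mul, map_ofNat, map_one] at hmod
  generalize PadicInt.toZModPow 2 h = b at *
  revert b
  decide

theorem generators_algModEq {α h : ℤ_[3]} (hα2 : α ^ 2 = -2) (hα1 : (3 : ℤ_[3]) ∣ α - 1)
    (hh : 2 * h = 1) {x y : SL(2, ℤ_[3])}
    (hx : (x : Matrix (Fin 2) (Fin 2) ℤ_[3]) = !![0, -1; 1, -1])
    (hy : (y : Matrix (Fin 2) (Fin 2) ℤ_[3]) = α • !![0, h; 1, -1]) :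
    AlgModEq ((3 : ℤ_[3]) ^ 2) ((y * x⁻¹ : SL(2, ℤ_[3])) : Matrix (Fin 2) (Fin 2) ℤ_[3])
        (1 + (3 : ℤ_[3]) ^ 1 • !![2, 0; 0, 1]) ∧
      AlgModEq ((3 : ℤ_[3]) ^ 2) ((x⁻¹ * y : SL(2, ℤ_[3])) : Matrix (Fin 2) (Fin 2) ℤ_[3])
        (1 + (3 : ℤ_[3]) ^ 1 • !![1, 1; 0, 2]) ∧
      AlgModEq ((3 : ℤ_[3]) ^ 2)
        ((x⁻¹ * x⁻¹ * y * x : SL(2, ℤ_[3])) : Matrix (Fin 2) (Fin 2) ℤ_[3])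
        (1 + (3 : ℤ_[3]) ^ 1 • !![1, 0; 2, 2]) := by
  have hα := toZModPow_two_of_sq_eq_neg_two hα2 hα1
  have hh' := toZModPow_two_of_two_mul_eq_one hh
  have mod_nine (z : ℤ_[3]) : (3 : ℤ_[3]) ^ 2 ∣ z ↔ PadicInt.toZModPow 2 z = 0 :=
    PadicInt.pow_dvd_iff_toZModPow_eq_zero 2 z
  simp only [Matrix.SpecialLinearGroup.coe_mul, Matrix.SpecialLinearGroup.coe_inv, hx, hy,
    Matrix.algModEq_iff, mod_nine]
  refine ⟨?_, ?_, ?_⟩ <;> intro i j <;> fin_cases i <;> fin_cases j <;>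
    simp [Matrix.adjugate_fin_two, Matrix.mul_apply, Fin.sum_univ_two, map_ofNat, hα, hh'] <;>
    decide

/-- The closed subgroup of `SL₂(ℤ₃)` generated by `z₀, z₁, z₂` equals the first
congruence kernel `N₁` (matrices congruent to the identity modulo 3). -/
theorem stmt_2 (α h : ℤ_[3]) (hα2 : α ^ 2 = -2) (hα1 : (3 : ℤ_[3]) ∣ (α - 1)) (hh : 2 * h = 1)
    (x y : SL(2, ℤ_[3]))
    (hx : (x : Matrix (Fin 2) (Fin 2) ℤ_[3]) = !![0, -1; 1, -1])
    (hy : (y : Matrix (Fin 2) (Fin 2) ℤ_[3]) = α • !![0, h; 1, -1])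
    (z₀ z₁ z₂ : SL(2, ℤ_[3]))
    (hz₀ : z₀ = y * x⁻¹) (hz₁ : z₁ = x⁻¹ * y) (hz₂ : z₂ = x⁻¹ * x⁻¹ * y * x)
    (N : ℕ → Subgroup SL(2, ℤ_[3]))
    (hN : ∀ k, ∀ A : SL(2, ℤ_[3]), A ∈ N k ↔
      ∀ i j, (3 : ℤ_[3]) ^ k ∣
        ((A : Matrix (Fin 2) (Fin 2) ℤ_[3]) i j - (1 : Matrix (Fin 2) (Fin 2) ℤ_[3]) i j)) :
    (Subgroup.closure {z₀, z₁, z₂}).topologicalClosure = N 1 := by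
  set H := Subgroup.closure {z₀, z₁, z₂}
  have hN1 : (N 1 : Set SL(2, ℤ_[3])) =
      {A : SL(2, ℤ_[3]) | AlgModEq ((3 : ℤ_[3]) ^ 1) (A : Matrix (Fin 2) (Fin 2) ℤ_[3]) 1} :=
    Set.ext fun A => (hN 1 A).trans Matrix.algModEq_iff.symm
  have mem_N1 {z : SL(2, ℤ_[3])} {m : Matrix (Fin 2) (Fin 2) ℤ_[3]}
      (hz : AlgModEq ((3 : ℤ_[3]) ^ 2) (z : Matrix (Fin 2) (Fin 2) ℤ_[3])
        (1 + (3 : ℤ_[3]) ^ 1 • m)) :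
      z ∈ N 1 := by
    rw [← SetLike.mem_coe, hN1]
    exact (hz.of_dvd (pow_dvd_pow 3 one_le_two)).trans (AlgModEq.add_smul_left 1 m)
  obtain ⟨h₀, h₁, h₂⟩ := hz₀ ▸ hz₁ ▸ hz₂ ▸ generators_algModEq hα2 hα1 hh hx hy
  apply le_antisymm
  · refine H.topologicalClosure_minimal ((Subgroup.closure_le _).2 ?_) ?_
    · rintro z (rfl | rfl | rfl)
      exacts [mem_N1 h₀, mem_N1 h₁, mem_N1 h₂]
    · rw [hN1]
      simpa using Matrix.SpecialLinearGroup.isClosed_setOf_algModEq (p := 3) 1 1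
  · intro A hA
    rw [← SetLike.mem_coe, hN1, Set.mem_ofPred_eq, pow_one] at hA
    refine Subgroup.mem_topologicalClosure_of_algModEq_one (fun M hM => ?_) hA
    refine Submodule.mem_of_three_dvd_trace (H.prime_smul_mem_layerAddSubmonoid 0) ?_ ?_ ?_ hM
    exacts [Subgroup.mem_layer_iff.2 ⟨z₀, Subgroup.subset_closure (by simp), h₀⟩,
      Subgroup.mem_layer_iff.2 ⟨z₁, Subgroup.subset_closure (by simp), h₁⟩,
      Subgroup.mem_layer_iff.2 ⟨z₂, Subgroup.subset_closure (by simp), h₂⟩]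
end
end

section
/- For all k, ℓ ≥ 1, the closure of the commutator subgroup [N_k, N_ℓ] in SL₂(ℤ₃) equals N_{k+ℓ}. -/
open Matrix MatrixGroups

noncomputable section

/-!
The closure of `⁅N k, N ℓ⁆` lies in `N (k + ℓ)` because `N (k + ℓ)` is an open, hence
closed, subgroup and `X * Y - Y * X = (X - 1) * (Y - 1) - (Y - 1) * (X - 1)`.

Conversely, every `A ∈ N m` with `m ≥ k + ℓ` is a product of commutators modulo
`N (m + 1)`. Write `A = lower (c / a) * diag (a, a⁻¹) * upper (b / a)`. The unipotent
factors are exact commutators: `⁅diag (u, u⁻¹), upper t⁆ = upper ((u ^ 2 - 1) * t)`, and for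
`u = 1 + 3 ^ k` the factor `u ^ 2 - 1 = 3 ^ k * (2 + 3 ^ k)` is `3 ^ k` times a unit. The
diagonal factor agrees with `⁅upper (3 ^ k), lower t⁆` modulo `3 ^ (m + 1)` when
`3 ^ k * t = a - 1`. Hence `N (k + ℓ) ⊆ ⁅N k, N ℓ⁆ * N m` for every `m`, and the `N m`
shrink to the identity.
-/

open Filter Topology
open scoped commutatorElement

theorem IsLocalRing.isUnit_add_of_mem_maximalIdeal {R : Type*} [CommRing R] [IsLocalRing R]
    {a x : R} (ha : IsUnit a) (hx : x ∈ maximalIdeal R) : IsUnit (a + x) :=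
  notMem_maximalIdeal.1 fun h => notMem_maximalIdeal.2 ha (by simpa using sub_mem h hx)

namespace Ideal

variable {R : Type*} [CommRing R] {π x y : R}

theorem span_singleton_pow_antitone : Antitone fun m : ℕ => span {π ^ m} :=
  fun _ _ h => span_singleton_le_span_singleton.2 (pow_dvd_pow π h)

theorem mul_mem_span_singleton_pow {i j m : ℕ} (hx : x ∈ span {π ^ i})
    (hy : y ∈ span {π ^ j}) (h : m ≤ i + j) : x * y ∈ span {π ^ m} := by
  have := mul_mem_mul hx hy
  rw [span_singleton_mul_span_singleton, ← pow_add] at this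
  exact span_singleton_pow_antitone h this

end Ideal

theorem Matrix.mul_apply_mem_mul {l m o R : Type*} [Fintype m] [CommRing R] {I J : Ideal R}
    {P : Matrix l m R} {Q : Matrix m o R} (hP : ∀ i j, P i j ∈ I) (hQ : ∀ i j, Q i j ∈ J)
    (i : l) (j : o) : (P * Q) i j ∈ I * J :=
  Ideal.sum_mem _ fun l _ => Ideal.mul_mem_mul (hP i l) (hQ l j)

namespace Subgroup

variable {G : Type*} [Group G] {H : Subgroup G} {N : ℕ → Subgroup G}

theorem le_sup_of_le_sup_succ (hN : Antitone N) {m₀ : ℕ}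
    (step : ∀ m ≥ m₀, N m ≤ H ⊔ N (m + 1)) (m : ℕ) : N m₀ ≤ H ⊔ N m := by
  rcases le_total m m₀ with h | h
  · exact (hN h).trans le_sup_right
  induction m, h using Nat.le_induction with
  | base => exact le_sup_right
  | succ m hm ih => exact ih.trans (sup_le le_sup_left (step m hm))

variable [TopologicalSpace G] [IsTopologicalGroup G]

theorem mem_topologicalClosure_of_forall_mem_sup [∀ m, (N m).Normal]
    (hN : ∀ g : ℕ → G, (∀ m, g m ∈ N m) → Tendsto g atTop (𝓝 1)) {A : G}
    (hA : ∀ m, A ∈ H ⊔ N m) : A ∈ H.topologicalClosure := by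
  choose h hH n hn hhn using fun m => mem_sup_of_normal_right.mp (hA m)
  have : Tendsto (fun m => A * (n m)⁻¹) atTop (𝓝 A) := by
    simpa using ((hN _ fun m => inv_mem (hn m)).const_mul A)
  refine mem_closure_of_tendsto (this.congr fun m => ?_) (Eventually.of_forall hH)
  rw [← hhn m, mul_inv_cancel_right]

theorem le_topologicalClosure_of_le_sup_succ [∀ m, (N m).Normal] (hN : Antitone N)
    (hlim : ∀ g : ℕ → G, (∀ m, g m ∈ N m) → Tendsto g atTop (𝓝 1)) {m₀ : ℕ}
    (step : ∀ m ≥ m₀, N m ≤ H ⊔ N (m + 1)) : N m₀ ≤ H.topologicalClosure :=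
  fun _ hA => mem_topologicalClosure_of_forall_mem_sup hlim fun m =>
    le_sup_of_le_sup_succ hN step m hA

end Subgroup

namespace Matrix.SpecialLinearGroup

section Congruence

variable {n : Type*} [DecidableEq n] [Fintype n] {R : Type*} [CommRing R]

def congruenceSubgroup (I : Ideal R) : Subgroup (SpecialLinearGroup n R) :=
  (map (Ideal.Quotient.mk I)).ker

instance (I : Ideal R) : (congruenceSubgroup I : Subgroup (SpecialLinearGroup n R)).Normal :=
  MonoidHom.normal_ker _

variable {I J : Ideal R}

theorem inv_mul_mem_congruenceSubgroup_iff {A B : SpecialLinearGroup n R} :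
    A⁻¹ * B ∈ congruenceSubgroup I ↔ ∀ i j, B i j - A i j ∈ I := by
  rw [congruenceSubgroup, MonoidHom.mem_ker, map_mul, map_inv, inv_mul_eq_one, ext_iff]
  simp [Ideal.Quotient.eq, sub_mem_comm_iff]

theorem mem_congruenceSubgroup {A : SpecialLinearGroup n R} :
    A ∈ congruenceSubgroup I ↔ ∀ i j, A i j - (1 : Matrix n n R) i j ∈ I := by
  simpa using inv_mul_mem_congruenceSubgroup_iff (I := I) (A := 1) (B := A)

theorem congruenceSubgroup_mono (h : I ≤ J) :
    (congruenceSubgroup I : Subgroup (SpecialLinearGroup n R)) ≤ congruenceSubgroup J :=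
  fun _ hA => mem_congruenceSubgroup.2 fun i j => h (mem_congruenceSubgroup.1 hA i j)

theorem commutator_congruenceSubgroup_le :
    ⁅congruenceSubgroup (n := n) I, congruenceSubgroup (n := n) J⁆ ≤
      congruenceSubgroup (I * J) := by
  rw [Subgroup.commutator_le]
  intro X hX Y hY
  have hX' : ∀ i j, ((X : Matrix n n R) - 1) i j ∈ I := mem_congruenceSubgroup.1 hX
  have hY' : ∀ i j, ((Y : Matrix n n R) - 1) i j ∈ J := mem_congruenceSubgroup.1 hY
  have hXY : ((X * Y : SpecialLinearGroup n R) : Matrix n n R) - (Y * X : SpecialLinearGroup n R)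
      = (X - 1) * (Y - 1) - (Y - 1) * (X - 1) := by
    simp only [coe_mul]; noncomm_ring
  rw [show ⁅X, Y⁆ = X * Y * (Y * X)⁻¹ by group, Subgroup.Normal.mem_comm_iff inferInstance,
    inv_mul_mem_congruenceSubgroup_iff]
  intro i j
  rw [← Matrix.sub_apply, hXY, Matrix.sub_apply]
  exact sub_mem (mul_apply_mem_mul hX' hY' i j) (mul_comm I J ▸ mul_apply_mem_mul hY' hX' i j)

section Topology

variable [TopologicalSpace R] [IsTopologicalRing R]

theorem isOpen_congruenceSubgroup {I : Ideal R} (hI : IsOpen (I : Set R)) :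
    IsOpen (congruenceSubgroup (n := n) I : Set (SpecialLinearGroup n R)) := by
  have : (congruenceSubgroup (n := n) I : Set (SpecialLinearGroup n R)) =
      ⋂ i, ⋂ j, {A : SpecialLinearGroup n R | A i j - (1 : Matrix n n R) i j ∈ I} := by
    ext A; simp [mem_congruenceSubgroup]
  rw [this]
  exact isOpen_iInter_of_finite fun i => isOpen_iInter_of_finite fun j =>
    hI.preimage ((continuous_subtype_val.matrix_elem i j).sub continuous_const)

theorem tendsto_one_of_forall_mem_congruenceSubgroup {I : ℕ → Ideal R}
    (hI : Tendsto (fun m => (I m : Set R)) atTop (𝓝 0).smallSets)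
    {g : ℕ → SpecialLinearGroup n R} (hg : ∀ m, g m ∈ congruenceSubgroup (I m)) :
    Tendsto g atTop (𝓝 1) := by
  refine (IsInducing.subtypeVal (t := {A : Matrix n n R | A.det = 1})).tendsto_nhds_iff.2
    (tendsto_pi_nhds.2 fun i => tendsto_pi_nhds.2 fun j => tendsto_sub_nhds_zero_iff.1 <|
      hI.of_smallSets (Eventually.of_forall fun m => mem_congruenceSubgroup.1 (hg m) i j))

end Topology

end Congruence

section SL2

variable {R : Type*} [CommRing R]

def unipotentUpper (t : R) : SL(2, R) :=
  ⟨!![1, t; 0, 1], by simp [det_fin_two_of]⟩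

def unipotentLower (t : R) : SL(2, R) :=
  ⟨!![1, 0; t, 1], by simp [det_fin_two_of]⟩

def diagUnit (u : Rˣ) : SL(2, R) :=
  ⟨!![(u : R), 0; 0, (u⁻¹ : Rˣ)], by simp [det_fin_two_of]⟩

@[simp]
theorem coe_unipotentUpper (t : R) :
    (unipotentUpper t : Matrix (Fin 2) (Fin 2) R) = !![1, t; 0, 1] := rfl

@[simp]
theorem coe_unipotentLower (t : R) :
    (unipotentLower t : Matrix (Fin 2) (Fin 2) R) = !![1, 0; t, 1] := rfl

@[simp]
theorem coe_diagUnit (u : Rˣ) :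
    (diagUnit u : Matrix (Fin 2) (Fin 2) R) = !![(u : R), 0; 0, (u⁻¹ : Rˣ)] := rfl

theorem commutatorElement_diagUnit_unipotentUpper (u : Rˣ) (t : R) :
    ⁅diagUnit u, unipotentUpper t⁆ = unipotentUpper (((u : R) ^ 2 - 1) * t) := by
  ext i j
  fin_cases i <;> fin_cases j <;> simp [commutatorElement_def, coe_inv, adjugate_fin_two]
  ring

theorem commutatorElement_inv_diagUnit_unipotentLower (u : Rˣ) (t : R) :
    ⁅(diagUnit u)⁻¹, unipotentLower t⁆ = unipotentLower (((u : R) ^ 2 - 1) * t) := by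
  ext i j
  fin_cases i <;> fin_cases j <;> simp [commutatorElement_def, coe_inv, adjugate_fin_two]
  ring

theorem coe_commutatorElement_unipotentUpper_unipotentLower (s t : R) :
    ((⁅unipotentUpper s, unipotentLower t⁆ : SL(2, R)) : Matrix (Fin 2) (Fin 2) R) =
      !![1 + s * t + (s * t) ^ 2, -(s * (s * t)); t * (s * t), 1 - s * t] := by
  ext i j
  fin_cases i <;> fin_cases j <;>
    simp [commutatorElement_def, coe_inv, adjugate_fin_two] <;> ring

theorem eq_unipotentLower_mul_diagUnit_mul_unipotentUpper (A : SL(2, R)) (a : Rˣ)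
    (ha : (a : R) = A 0 0) :
    A = unipotentLower (A 1 0 * a⁻¹) * diagUnit a * unipotentUpper (A 0 1 * a⁻¹) := by
  have hdet : a * A 1 1 - A 0 1 * A 1 0 = 1 := by
    rw [ha, ← det_fin_two]; exact A.2
  ext i j
  fin_cases i <;> fin_cases j <;> simp [← ha]
  · linear_combination -A 0 1 * a.mul_inv
  · linear_combination ((a⁻¹ : Rˣ) : R) * hdet - A 1 1 * a.inv_mul

variable {I : Ideal R}

theorem unipotentUpper_mem_congruenceSubgroup {t : R} (ht : t ∈ I) :
    unipotentUpper t ∈ congruenceSubgroup I := by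
  rw [mem_congruenceSubgroup]
  intro i j
  fin_cases i <;> fin_cases j <;> simp [ht]

theorem unipotentLower_mem_congruenceSubgroup {t : R} (ht : t ∈ I) :
    unipotentLower t ∈ congruenceSubgroup I := by
  rw [mem_congruenceSubgroup]
  intro i j
  fin_cases i <;> fin_cases j <;> simp [ht]

theorem diagUnit_mem_congruenceSubgroup {u : Rˣ} (hu : (u : R) - 1 ∈ I) :
    diagUnit u ∈ congruenceSubgroup I := by
  have hu' : ((u⁻¹ : Rˣ) : R) - 1 = -(u⁻¹ * ((u : R) - 1)) := by
    rw [mul_sub, Units.inv_mul]; ring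
  rw [mem_congruenceSubgroup]
  intro i j
  fin_cases i <;> fin_cases j <;> simp [hu, hu', I.mul_mem_left _ hu]

theorem inv_commutatorElement_mul_diagUnit_mem {s t : R} {a : Rˣ} (ha : (a : R) = 1 + s * t)
    (hs : s * (s * t) ∈ I) (ht : t * (s * t) ∈ I) :
    ⁅unipotentUpper s, unipotentLower t⁆⁻¹ * diagUnit a ∈ congruenceSubgroup I := by
  have hsq : (s * t) ^ 2 ∈ I := by
    rw [show (s * t) ^ 2 = t * (s * (s * t)) by ring]; exact I.mul_mem_left t hs
  have hinv : ((a⁻¹ : Rˣ) : R) - (1 - s * t) = a⁻¹ * (s * t) ^ 2 := by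
    linear_combination (1 - s * t) * a.inv_mul - ((a⁻¹ : Rˣ) : R) * (1 - s * t) * ha
  rw [inv_mul_mem_congruenceSubgroup_iff]
  intro i j
  fin_cases i <;> fin_cases j <;>
    simp [coe_commutatorElement_unipotentUpper_unipotentLower, ha, hs, ht, hsq, hinv]

theorem diagUnit_mem_commutator_sup {π : R} {k ℓ m : ℕ} (hk : k ≠ 0) (hℓ : ℓ ≠ 0)
    (hm : k + ℓ ≤ m) {a : Rˣ} (ha : (a : R) - 1 ∈ Ideal.span {π ^ m}) :
    diagUnit a ∈ ⁅congruenceSubgroup (n := Fin 2) (Ideal.span {π ^ k}),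
      congruenceSubgroup (n := Fin 2) (Ideal.span {π ^ ℓ})⁆ ⊔
        congruenceSubgroup (Ideal.span {π ^ (m + 1)}) := by
  obtain ⟨α, hα⟩ := Ideal.mem_span_singleton.1 ha
  have hst : π ^ k * (π ^ (m - k) * α) = a - 1 := by
    rw [hα, ← mul_assoc, ← pow_add, Nat.add_sub_cancel' (by omega)]
  have hs : π ^ k ∈ Ideal.span {π ^ k} := Ideal.mem_span_singleton_self _
  have ht : π ^ (m - k) * α ∈ Ideal.span {π ^ (m - k)} :=
    Ideal.mul_mem_right _ _ (Ideal.mem_span_singleton_self _)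
  have hC := Subgroup.commutator_mem_commutator (unipotentUpper_mem_congruenceSubgroup hs)
    (unipotentLower_mem_congruenceSubgroup
      (Ideal.span_singleton_pow_antitone (show ℓ ≤ m - k by omega) ht))
  have hD := inv_commutatorElement_mul_diagUnit_mem (I := Ideal.span {π ^ (m + 1)}) (a := a)
    (by rw [hst]; ring) (by rw [hst]; exact Ideal.mul_mem_span_singleton_pow hs ha (by omega))
    (by rw [hst]; exact Ideal.mul_mem_span_singleton_pow ht ha (by omega))
  simpa only [mul_inv_cancel_left] using Subgroup.mul_mem_sup hC hD

end SL2

section IsLocalRing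

variable {R : Type*} [CommRing R] [IsLocalRing R] {π : R}

theorem exists_sq_sub_one_mul_eq (h2 : IsUnit (2 : R)) (hπ : π ∈ IsLocalRing.maximalIdeal R)
    {k ℓ : ℕ} (hk : k ≠ 0) {t : R} (ht : t ∈ Ideal.span {π ^ (k + ℓ)}) :
    ∃ u : Rˣ, (u : R) - 1 ∈ Ideal.span {π ^ k} ∧
      ∃ t' ∈ Ideal.span {π ^ ℓ}, ((u : R) ^ 2 - 1) * t' = t := by
  have hπk : π ^ k ∈ IsLocalRing.maximalIdeal R := Ideal.pow_mem_of_mem _ hπ k (by omega)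
  obtain ⟨u, hu⟩ := IsLocalRing.isUnit_add_of_mem_maximalIdeal isUnit_one hπk
  obtain ⟨w, hw⟩ := IsLocalRing.isUnit_add_of_mem_maximalIdeal h2 hπk
  obtain ⟨β, rfl⟩ := Ideal.mem_span_singleton.1 ht
  -- `u ^ 2 - 1 = π ^ k * w` with `w = 2 + π ^ k` a unit
  refine ⟨u, Ideal.mem_span_singleton.2 ⟨1, by rw [hu]; ring⟩, π ^ ℓ * (β * ↑w⁻¹),
    Ideal.mul_mem_right _ _ (Ideal.mem_span_singleton_self _), ?_⟩
  rw [hu]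
  linear_combination -(π ^ k * π ^ ℓ * β * ↑w⁻¹) * hw + π ^ k * π ^ ℓ * β * w.mul_inv

theorem unipotentUpper_mem_commutator (h2 : IsUnit (2 : R))
    (hπ : π ∈ IsLocalRing.maximalIdeal R) {k ℓ : ℕ} (hk : k ≠ 0) {t : R}
    (ht : t ∈ Ideal.span {π ^ (k + ℓ)}) :
    unipotentUpper t ∈ ⁅congruenceSubgroup (n := Fin 2) (Ideal.span {π ^ k}),
      congruenceSubgroup (n := Fin 2) (Ideal.span {π ^ ℓ})⁆ := by
  obtain ⟨u, hu, t', ht', rfl⟩ := exists_sq_sub_one_mul_eq h2 hπ hk ht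
  rw [← commutatorElement_diagUnit_unipotentUpper]
  exact Subgroup.commutator_mem_commutator (diagUnit_mem_congruenceSubgroup hu)
    (unipotentUpper_mem_congruenceSubgroup ht')

theorem unipotentLower_mem_commutator (h2 : IsUnit (2 : R))
    (hπ : π ∈ IsLocalRing.maximalIdeal R) {k ℓ : ℕ} (hk : k ≠ 0) {t : R}
    (ht : t ∈ Ideal.span {π ^ (k + ℓ)}) :
    unipotentLower t ∈ ⁅congruenceSubgroup (n := Fin 2) (Ideal.span {π ^ k}),
      congruenceSubgroup (n := Fin 2) (Ideal.span {π ^ ℓ})⁆ := by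
  obtain ⟨u, hu, t', ht', rfl⟩ := exists_sq_sub_one_mul_eq h2 hπ hk ht
  rw [← commutatorElement_inv_diagUnit_unipotentLower]
  exact Subgroup.commutator_mem_commutator (inv_mem (diagUnit_mem_congruenceSubgroup hu))
    (unipotentLower_mem_congruenceSubgroup ht')

theorem congruenceSubgroup_le_commutator_sup (h2 : IsUnit (2 : R))
    (hπ : π ∈ IsLocalRing.maximalIdeal R) {k ℓ m : ℕ} (hk : k ≠ 0) (hℓ : ℓ ≠ 0)
    (hm : k + ℓ ≤ m) :
    congruenceSubgroup (Ideal.span {π ^ m}) ≤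
      ⁅congruenceSubgroup (n := Fin 2) (Ideal.span {π ^ k}),
        congruenceSubgroup (n := Fin 2) (Ideal.span {π ^ ℓ})⁆ ⊔
          congruenceSubgroup (Ideal.span {π ^ (m + 1)}) := by
  intro A hA
  have hA' := mem_congruenceSubgroup.1 hA
  have h00 : A 0 0 - 1 ∈ Ideal.span {π ^ m} := by simpa using hA' 0 0
  obtain ⟨a, ha⟩ : IsUnit (A 0 0) := by
    simpa using IsLocalRing.isUnit_add_of_mem_maximalIdeal isUnit_one
      ((Ideal.span_singleton_le_iff_mem _).2 (Ideal.pow_mem_of_mem _ hπ m (by omega)) h00)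
  have hoff {i j : Fin 2} (hij : i ≠ j) : A i j * ↑a⁻¹ ∈ Ideal.span {π ^ (k + ℓ)} :=
    Ideal.mul_mem_right _ _ (Ideal.span_singleton_pow_antitone hm (by simpa [hij] using hA' i j))
  rw [eq_unipotentLower_mul_diagUnit_mul_unipotentUpper A a ha]
  refine mul_mem (mul_mem ?_ ?_) ?_
  · exact Subgroup.mem_sup_left (unipotentLower_mem_commutator h2 hπ hk (hoff (by decide)))
  · exact diagUnit_mem_commutator_sup hk hℓ hm (ha ▸ h00)
  · exact Subgroup.mem_sup_left (unipotentUpper_mem_commutator h2 hπ hk (hoff (by decide)))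

end IsLocalRing

end Matrix.SpecialLinearGroup

namespace PadicInt

variable {p : ℕ} [Fact p.Prime]

theorem span_pow_eq_closedBall (m : ℕ) :
    (Ideal.span {(p : ℤ_[p]) ^ m} : Set ℤ_[p]) = Metric.closedBall 0 ((p : ℝ)⁻¹ ^ m) := by
  ext x; simp [← norm_le_pow_iff_mem_span_pow]

theorem isOpen_span_pow (m : ℕ) : IsOpen (Ideal.span {(p : ℤ_[p]) ^ m} : Set ℤ_[p]) := by
  rw [span_pow_eq_closedBall]
  exact IsUltrametricDist.isOpen_closedBall _
    (pow_ne_zero _ (inv_ne_zero (mod_cast (Fact.out : p.Prime).ne_zero)))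

theorem tendsto_span_pow_smallSets :
    Tendsto (fun m => (Ideal.span {(p : ℤ_[p]) ^ m} : Set ℤ_[p])) atTop (𝓝 0).smallSets := by
  have hp : 1 < (p : ℝ) := mod_cast (Fact.out : p.Prime).one_lt
  have hpow : Tendsto (fun m : ℕ => (p : ℝ)⁻¹ ^ m) atTop (𝓝 0) :=
    tendsto_pow_atTop_nhds_zero_of_lt_one (by positivity) (inv_lt_one_of_one_lt₀ hp)
  rw [Metric.nhds_basis_closedBall.smallSets.tendsto_right_iff]
  intro ε hε
  filter_upwards [hpow.eventually (ge_mem_nhds hε)] with m hm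
  rw [span_pow_eq_closedBall]
  exact Metric.closedBall_subset_closedBall hm

end PadicInt

open Matrix.SpecialLinearGroup in
/-- For all `k, ℓ ≥ 1`, the closure of the commutator subgroup `[N_k, N_ℓ]`
in `SL₂(ℤ₃)` equals `N_{k+ℓ}`. -/
theorem stmt_3 (N : ℕ → Subgroup SL(2, ℤ_[3]))
    (hN : ∀ k, ∀ A : SL(2, ℤ_[3]), A ∈ N k ↔
      ∀ i j, (3 : ℤ_[3]) ^ k ∣
        ((A : Matrix (Fin 2) (Fin 2) ℤ_[3]) i j - (1 : Matrix (Fin 2) (Fin 2) ℤ_[3]) i j)) :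
    ∀ k ℓ : ℕ, 1 ≤ k → 1 ≤ ℓ →
      (⁅N k, N ℓ⁆ : Subgroup SL(2, ℤ_[3])).topologicalClosure = N (k + ℓ) := by
  intro k ℓ hk hℓ
  obtain rfl : N = fun m => congruenceSubgroup (Ideal.span {(3 : ℤ_[3]) ^ m}) :=
    funext fun m => Subgroup.ext fun A =>
      (hN m A).trans (by simp [mem_congruenceSubgroup, Ideal.mem_span_singleton])
  have h3 : (3 : ℤ_[3]) ∈ IsLocalRing.maximalIdeal ℤ_[3] := by
    rw [PadicInt.maximalIdeal_eq_span_p]; exact_mod_cast Ideal.mem_span_singleton_self _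
  have h2 : IsUnit (2 : ℤ_[3]) := PadicInt.isUnit_iff.2 <|
    mod_cast PadicInt.norm_natCast_eq_one_iff (p := 3) (n := 2) |>.2 (by norm_num)
  apply le_antisymm
  · refine Subgroup.topologicalClosure_minimal _ (commutator_congruenceSubgroup_le.trans_eq ?_) <|
      Subgroup.isClosed_of_isOpen _ <|
        isOpen_congruenceSubgroup (mod_cast PadicInt.isOpen_span_pow (p := 3) (k + ℓ))
    rw [Ideal.span_singleton_mul_span_singleton, ← pow_add]
  · exact Subgroup.le_topologicalClosure_of_le_sup_succ
      (fun _ _ h => congruenceSubgroup_mono (Ideal.span_singleton_pow_antitone h))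
      (fun _ => tendsto_one_of_forall_mem_congruenceSubgroup
        (mod_cast PadicInt.tendsto_span_pow_smallSets (p := 3)))
      fun m hm => congruenceSubgroup_le_commutator_sup h2 h3 (by omega) (by omega) hm
end
end

section
/- Let α ∈ ℤ₃ satisfy α² = −2 and α ≡ 1 (mod 3). Then for every k ≥ 1, α^{3^{k−1}} ≡ 1 (mod 3^k) but α^{3^{k−1}} ≢ 1 (mod 3^{k+1}); in other words, α is a topological generator of the torsion-free part 1 + 3ℤ₃ of ℤ₃^×. -/
private lemma padic_three_ne_zero : (3 : ℤ_[3]) ≠ 0 := by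
  intro h
  have : ‖(3 : ℤ_[3])‖ = (3 : ℝ)⁻¹ := by
    simpa using PadicInt.norm_p (p := 3)
  rw [h] at this
  norm_num at this

private lemma not_three_dvd_one : ¬ (3 : ℤ_[3]) ∣ 1 := by
  intro h
  have hu : IsUnit (3 : ℤ_[3]) := isUnit_of_dvd_one h
  rw [PadicInt.isUnit_iff] at hu
  have : ‖(3 : ℤ_[3])‖ = (3 : ℝ)⁻¹ := by
    simpa using PadicInt.norm_p (p := 3)
  rw [this] at hu
  norm_num at hu

private lemma step (x u : ℤ_[3]) (m : ℕ) (hx : x = 1 + 3 ^ (m + 1) * u)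
    (hu : ¬ (3 : ℤ_[3]) ∣ u) :
    ∃ v, x ^ 3 = 1 + 3 ^ (m + 2) * v ∧ ¬ (3 : ℤ_[3]) ∣ v := by
  refine ⟨u + 3 ^ (m + 1) * u ^ 2 + 3 ^ (2 * m + 1) * u ^ 3, ?_, ?_⟩
  · subst hx; ring
  · rintro ⟨w, hw⟩
    exact hu ⟨w - 3 ^ m * u ^ 2 - 3 ^ (2 * m) * u ^ 3, by linear_combination hw⟩

private lemma main_claim (α : ℤ_[3]) (hα2 : α ^ 2 = -2) (hα1 : (3 : ℤ_[3]) ∣ (α - 1)) :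
    ∀ k : ℕ, ∃ u, α ^ 3 ^ k = 1 + 3 ^ (k + 1) * u ∧ ¬ (3 : ℤ_[3]) ∣ u := by
  obtain ⟨t, ht⟩ := hα1
  have hαt : α = 1 + 3 * t := by linear_combination ht
  subst hαt
  have h2 : (2 : ℤ_[3]) * t + 3 * t ^ 2 = -1 := by
    apply mul_left_cancel₀ padic_three_ne_zero
    linear_combination hα2
  have ht3 : ¬ (3 : ℤ_[3]) ∣ t := by
    rintro ⟨s, hs⟩
    exact not_three_dvd_one
      ⟨-(2 * s + 9 * s ^ 2), by linear_combination h2 + (-2 - 3 * t - 9 * s) * hs⟩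
  intro k
  induction k with
  | zero => exact ⟨t, by ring, ht3⟩
  | succ n ih =>
    obtain ⟨u, hxu, hu⟩ := ih
    obtain ⟨v, hv, hv3⟩ := step ((1 + 3 * t) ^ 3 ^ n) u n hxu hu
    refine ⟨v, ?_, hv3⟩
    rw [← hv, ← pow_mul, pow_succ]

/-- Let `α ∈ ℤ₃` satisfy `α² = -2` and `α ≡ 1 (mod 3)`. Then for every
`k ≥ 1`, `α^(3^(k-1)) ≡ 1 (mod 3^k)` but `α^(3^(k-1)) ≢ 1 (mod 3^(k+1))`; in other words,
`α` is a topological generator of the torsion-free part `1 + 3ℤ₃` of `ℤ₃ˣ`. -/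
theorem stmt_6 (α : ℤ_[3]) (hα2 : α ^ 2 = -2) (hα1 : (3 : ℤ_[3]) ∣ (α - 1)) :
    ∀ k : ℕ, 1 ≤ k →
      (3 : ℤ_[3]) ^ k ∣ (α ^ 3 ^ (k - 1) - 1) ∧
      ¬ (3 : ℤ_[3]) ^ (k + 1) ∣ (α ^ 3 ^ (k - 1) - 1) := by
  intro k hk
  obtain ⟨m, rfl⟩ := Nat.exists_eq_add_of_le hk
  simp only [Nat.add_sub_cancel_left]
  obtain ⟨u, hxu, hu⟩ := main_claim α hα2 hα1 m
  have hdiff : α ^ 3 ^ m - 1 = 3 ^ (1 + m) * u := by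
    rw [Nat.add_comm]; linear_combination hxu
  constructor
  · exact ⟨u, hdiff⟩
  · rintro ⟨w, hw⟩
    rw [pow_succ] at hw
    apply hu
    refine ⟨w, ?_⟩
    have h3 : (3 : ℤ_[3]) ^ (1 + m) ≠ 0 := pow_ne_zero _ padic_three_ne_zero
    apply mul_left_cancel₀ h3
    linear_combination hw - hdiff
end

section
/- Every element of the closure of the commutator subgroup [N₁, N₁] in SL₂(ℤ₃) can be written as the cube A³ of some element A ∈ N₁. -/
open Matrix MatrixGroups

noncomputable section

/-!
Commutators of elements of `N₁ = Γ(3)` lie in `N₂ = Γ(9)`, which is closed, so the closure of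
`[N₁, N₁]` lies in `N₂`. Every `g ∈ N₂` is a cube from `N₁`: if `g ≡ A³ mod 3^(m+2)` with
`A ∈ N₁`, write `g A⁻³ = 1 + 3Z`; correcting `1 + Z` to determinant one gives
`C ≡ 1 mod 3^(m+1)` with `(CA)³ ≡ (1 + 3(C - 1))A³ ≡ g mod 3^(m+3)`. The approximate cube roots
form a decreasing sequence of nonempty compact subsets of `N₁`, and a point of their intersection
is an exact cube root.
-/

open IsLocalRing

theorem IsLocalRing.isUnit_of_sub_one_mem_maximalIdeal {R : Type*} [CommRing R] [IsLocalRing R]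
    {x : R} (h : x - 1 ∈ maximalIdeal R) : IsUnit x := by
  simpa using isUnit_one_sub_self_of_mem_nonunits (1 - x) (by rw [← neg_sub]; exact neg_mem h)

theorem IsClosed.matrix {R m n : Type*} [TopologicalSpace R] {S : Set R} (hS : IsClosed S) :
    IsClosed (S.matrix : Set (Matrix m n R)) :=
  Set.matrix_eq_pi ▸
    (isClosed_set_pi fun _ _ => isClosed_set_pi fun _ _ => hS).preimage continuous_id

namespace Ideal

variable {R : Type*} [CommRing R]

theorem isClosed_span_singleton [TopologicalSpace R] [ContinuousMul R] [CompactSpace R]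
    [T2Space R] (x : R) : IsClosed (span {x} : Set R) := by
  have : (span {x} : Set R) = Set.range (· * x) := by ext; simp [mem_span_singleton']
  rw [this]
  exact (isCompact_range (continuous_mul_const x)).isClosed

variable {n : Type*} [Fintype n] [DecidableEq n]

theorem mul_mem_matrix_mul {I J : Ideal R} {X Y : Matrix n n R} (hX : X ∈ I.matrix n)
    (hY : Y ∈ J.matrix n) : X * Y ∈ (I * J).matrix n :=
  fun i j => by
    rw [Matrix.mul_apply]
    exact _root_.sum_mem fun k _ => mul_mem_mul (hX i k) (hY k j)

theorem mul_mem_matrix_right {I : Ideal R} {X : Matrix n n R} (hX : X ∈ I.matrix n)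
    (Y : Matrix n n R) : X * Y ∈ I.matrix n := by
  simpa using mul_mem_matrix_mul hX (J := ⊤) fun _ _ => trivial

theorem mul_mem_matrix_pow {I : Ideal R} {a b c : ℕ} (h : c ≤ a + b) {X Y : Matrix n n R}
    (hX : X ∈ (I ^ a).matrix n) (hY : Y ∈ (I ^ b).matrix n) : X * Y ∈ (I ^ c).matrix n :=
  matrix_monotone n (pow_le_pow_right h) (pow_add I a b ▸ mul_mem_matrix_mul hX hY)

theorem nsmul_mem_matrix_pow_succ {I : Ideal R} {c k : ℕ} (hc : (c : R) ∈ I)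
    {X : Matrix n n R} (hX : X ∈ (I ^ k).matrix n) : c • X ∈ (I ^ (k + 1)).matrix n :=
  fun i j => by
    rw [Matrix.smul_apply, nsmul_eq_mul, pow_succ']
    exact mul_mem_mul hc (hX i j)

theorem exists_smul_eq_of_mem_matrix_span_pow_succ {x : R} {k : ℕ} {X : Matrix n n R}
    (hX : X ∈ (span {x} ^ (k + 1)).matrix n) :
    ∃ Z ∈ (span {x} ^ k).matrix n, X = x • Z := by
  have : ∀ i j, ∃ z ∈ span {x} ^ k, x * z = X i j := fun i j =>
    mem_span_singleton_mul.1 (pow_succ' (span {x}) k ▸ hX i j)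
  choose Z hZ hXZ using this
  exact ⟨Matrix.of Z, hZ, by ext i j; simp [hXZ]⟩

/-- Written in terms of `δ = [A - 1, C - 1] ∈ I ^ (m + 2)`, every term of the difference carries
enough factors `3`, `A - 1`, `C - 1` or `δ`. -/
theorem mul_cube_sub_mem_matrix_pow {I : Ideal R} (h3 : (3 : R) ∈ I) {m : ℕ}
    {A C : Matrix n n R} (hA : A - 1 ∈ I.matrix n) (hC : C - 1 ∈ (I ^ (m + 1)).matrix n) :
    (C * A) ^ 3 - (1 + 3 • (C - 1)) * A ^ 3 ∈ (I ^ (m + 3)).matrix n := by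
  have h3 : ((3 : ℕ) : R) ∈ I := by exact_mod_cast h3
  have hA : A - 1 ∈ (I ^ 1).matrix n := by rwa [pow_one]
  have hδ : (A - 1) * (C - 1) - (C - 1) * (A - 1) ∈ (I ^ (m + 2)).matrix n :=
    sub_mem (mul_mem_matrix_pow (by omega) hA hC) (mul_mem_matrix_pow (by omega) hC hA)
  have hMA : (C - 1) * A ∈ (I ^ (m + 1)).matrix n := mul_mem_matrix_right hC A
  set δ := (A - 1) * (C - 1) - (C - 1) * (A - 1)
  have key : (C * A) ^ 3 - (1 + 3 • (C - 1)) * A ^ 3 =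
      3 • (δ * A ^ 2) + ((A - 1) * δ - δ * (A - 1)) * A
        + 3 • ((C - 1) * A * ((C - 1) * A) * A) + 2 • ((C - 1) * A * δ * A)
        + δ * A * ((C - 1) * A) + ((C - 1) * A) ^ 3 := by
    simp only [δ]
    noncomm_ring
  rw [key, pow_three]
  refine add_mem (add_mem (add_mem (add_mem (add_mem ?_ ?_) ?_) ?_) ?_) ?_
  · exact nsmul_mem_matrix_pow_succ h3 (mul_mem_matrix_right hδ _)
  · exact mul_mem_matrix_right (sub_mem (mul_mem_matrix_pow (by omega) hA hδ)
      (mul_mem_matrix_pow (by omega) hδ hA)) _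
  · exact nsmul_mem_matrix_pow_succ h3
      (mul_mem_matrix_right (mul_mem_matrix_pow (by omega) hMA hMA) _)
  · exact nsmul_mem (mul_mem_matrix_right (mul_mem_matrix_pow (by omega) hMA hδ) _) 2
  · exact mul_mem_matrix_pow (by omega) (mul_mem_matrix_right hδ A) hMA
  · exact mul_mem_matrix_pow (by omega) hMA (mul_mem_matrix_pow le_rfl hMA hMA)

end Ideal

namespace Matrix

variable {R : Type*} [CommRing R]

theorem det_one_add_of_det_one_add_three_nsmul [IsDomain R] (h3 : (3 : R) ≠ 0)
    {Z : Matrix (Fin 2) (Fin 2) R} (h : det (1 + 3 • Z : Matrix (Fin 2) (Fin 2) R) = 1) :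
    det (1 + Z) = 1 - 2 * det Z := by
  have key : det (1 + 3 • Z) - 3 * det (1 + Z) = -2 + 6 * det Z := by
    simp [det_fin_two, Matrix.smul_apply, -nsmul_eq_mul]
    ring
  apply mul_left_cancel₀ h3
  linear_combination -key + h

namespace SpecialLinearGroup

variable {n : Type*} [Fintype n] [DecidableEq n]

instance [TopologicalSpace R] [IsTopologicalRing R] [CompactSpace R] [T2Space R] :
    CompactSpace (SpecialLinearGroup n R) :=
  have : CompactSpace (Matrix n n R) := inferInstanceAs (CompactSpace (n → n → R))
  isCompact_iff_compactSpace.mp (isClosed_eq continuous_id.matrix_det continuous_const).isCompact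

theorem exists_sub_mem_matrix_of_det_sub_one_mem [Nonempty n] {I : Ideal R} {X : Matrix n n R}
    (hunit : IsUnit X.det) (hdet : X.det - 1 ∈ I) :
    ∃ S : SpecialLinearGroup n R, (S : Matrix n n R) - X ∈ I.matrix n := by
  obtain ⟨i⟩ := ‹Nonempty n›
  obtain ⟨u, hu⟩ := hunit
  have hu' : ((u⁻¹ : Rˣ) : R) - 1 ∈ I := by
    have : ((u⁻¹ : Rˣ) : R) - 1 = -(u⁻¹ : Rˣ) * (X.det - 1) := by
      rw [← hu]
      linear_combination u.inv_mul
    rw [this]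
    exact I.mul_mem_left _ hdet
  refine ⟨⟨X.updateRow i (((u⁻¹ : Rˣ) : R) • X i), ?_⟩, fun k j => ?_⟩
  · rw [det_updateRow_smul, updateRow_eq_self, ← hu, Units.inv_mul]
  · by_cases hk : k = i
    · subst hk
      simpa [sub_mul] using I.mul_mem_right (X k j) hu'
    · simp [hk]

variable (n) in
def principalCongruenceSubgroup (I : Ideal R) : Subgroup (SpecialLinearGroup n R) :=
  (map (Ideal.Quotient.mk I)).ker

variable {I J : Ideal R}

theorem mul_inv_mem_principalCongruenceSubgroup_iff {A B : SpecialLinearGroup n R} :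
    A * B⁻¹ ∈ principalCongruenceSubgroup n I ↔ (A : Matrix n n R) - B ∈ I.matrix n := by
  rw [principalCongruenceSubgroup, MonoidHom.mem_ker, map_mul, map_inv, mul_inv_eq_one,
    SpecialLinearGroup.ext_iff]
  simp [Ideal.Quotient.eq]

theorem mem_principalCongruenceSubgroup_iff {A : SpecialLinearGroup n R} :
    A ∈ principalCongruenceSubgroup n I ↔ (A : Matrix n n R) - 1 ∈ I.matrix n := by
  simpa using mul_inv_mem_principalCongruenceSubgroup_iff (I := I) (A := A) (B := 1)

theorem principalCongruenceSubgroup_mono (h : I ≤ J) :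
    principalCongruenceSubgroup n I ≤ principalCongruenceSubgroup n J := fun _ hA =>
  mem_principalCongruenceSubgroup_iff.2
    (Ideal.matrix_monotone n h (mem_principalCongruenceSubgroup_iff.1 hA))

theorem commutator_principalCongruenceSubgroup_le :
    ⁅principalCongruenceSubgroup n I, principalCongruenceSubgroup n J⁆ ≤
      principalCongruenceSubgroup n (I * J) := by
  rw [Subgroup.commutator_le]
  intro a ha b hb
  rw [mem_principalCongruenceSubgroup_iff] at ha hb
  rw [commutatorElement_def, show a * b * a⁻¹ * b⁻¹ = a * b * (b * a)⁻¹ by group,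
    mul_inv_mem_principalCongruenceSubgroup_iff, coe_mul, coe_mul,
    show (a : Matrix n n R) * b - b * a = (a - 1) * (b - 1) - (b - 1) * (a - 1) by noncomm_ring]
  exact sub_mem (Ideal.mul_mem_matrix_mul ha hb) (mul_comm I J ▸ Ideal.mul_mem_matrix_mul hb ha)

theorem isClosed_principalCongruenceSubgroup [TopologicalSpace R] [IsTopologicalRing R]
    (hI : IsClosed (I : Set R)) :
    IsClosed (principalCongruenceSubgroup n I : Set (SpecialLinearGroup n R)) := by
  have : (principalCongruenceSubgroup n I : Set (SpecialLinearGroup n R)) =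
      (fun A : SpecialLinearGroup n R => (A : Matrix n n R) - 1) ⁻¹' (I.matrix n) :=
    Set.ext fun _ => mem_principalCongruenceSubgroup_iff
  rw [this]
  exact hI.matrix.preimage (continuous_subtype_val.sub continuous_const)

theorem eq_one_of_forall_mem_principalCongruenceSubgroup_pow (hI : ⨅ k, I ^ k = ⊥)
    {A : SpecialLinearGroup n R} (hA : ∀ k, A ∈ principalCongruenceSubgroup n (I ^ k)) :
    A = 1 := by
  ext i j
  have : ((A : Matrix n n R) - 1) i j ∈ ⨅ k, I ^ k :=
    Ideal.mem_iInf.2 fun k => mem_principalCongruenceSubgroup_iff.1 (hA k) i j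
  rwa [hI, Ideal.mem_bot, sub_apply, sub_eq_zero] at this

end SpecialLinearGroup

end Matrix

namespace PadicInt

open Matrix SpecialLinearGroup

local notation "𝔭" => Ideal.span {(3 : ℤ_[3])}

local notation "M₂" => Matrix (Fin 2) (Fin 2) ℤ_[3]

theorem span_three_eq_maximalIdeal : 𝔭 = maximalIdeal ℤ_[3] := by
  simpa using (maximalIdeal_eq_span_p (p := 3)).symm

theorem isClosed_span_three_pow (k : ℕ) : IsClosed ((𝔭 ^ k : Ideal ℤ_[3]) : Set ℤ_[3]) := by
  rw [Ideal.span_singleton_pow]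
  exact Ideal.isClosed_span_singleton _

theorem exists_mem_principalCongruenceSubgroup_sub_three_nsmul_mem (m : ℕ)
    {W : SL(2, ℤ_[3])} (hW : W ∈ principalCongruenceSubgroup (Fin 2) (𝔭 ^ (m + 2))) :
    ∃ C ∈ principalCongruenceSubgroup (Fin 2) (𝔭 ^ (m + 1)),
      (W : M₂) - (1 + 3 • ((C : M₂) - 1)) ∈
        (𝔭 ^ (m + 3)).matrix (Fin 2) := by
  obtain ⟨Z, hZ, hWZ⟩ :=
    Ideal.exists_smul_eq_of_mem_matrix_span_pow_succ (mem_principalCongruenceSubgroup_iff.1 hW)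
  have hW : (W : M₂) = 1 + 3 • Z := by
    rw [← ofNat_smul_eq_nsmul (R := ℤ_[3]), ← hWZ, add_sub_cancel]
  have hdetZ : det Z ∈ 𝔭 ^ (m + 2) := by
    refine Ideal.pow_le_pow_right (show m + 2 ≤ (m + 1) + (m + 1) by omega) ?_
    rw [det_fin_two, pow_add]
    exact sub_mem (Ideal.mul_mem_mul (hZ 0 0) (hZ 1 1)) (Ideal.mul_mem_mul (hZ 0 1) (hZ 1 0))
  have hdet : det (1 + Z) - 1 ∈ 𝔭 ^ (m + 2) := by
    rw [det_one_add_of_det_one_add_three_nsmul (by norm_num) (hW ▸ W.2), sub_sub_cancel_left]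
    exact neg_mem (Ideal.mul_mem_left _ 2 hdetZ)
  have hunit : IsUnit (det (1 + Z)) := isUnit_of_sub_one_mem_maximalIdeal
    (span_three_eq_maximalIdeal ▸ Ideal.pow_le_self (by omega) hdet)
  obtain ⟨C, hC⟩ := exists_sub_mem_matrix_of_det_sub_one_mem hunit hdet
  refine ⟨C, mem_principalCongruenceSubgroup_iff.2 ?_, ?_⟩
  · rw [show (C : M₂) - 1 = (C - (1 + Z)) + Z by abel]
    exact add_mem (Ideal.matrix_monotone _ (Ideal.pow_le_pow_right (by omega)) hC) hZ
  · rw [hW, show (1 + 3 • Z) - (1 + 3 • ((C : M₂) - 1)) = -(3 • (C - (1 + Z))) by abel]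
    exact neg_mem (Ideal.nsmul_mem_matrix_pow_succ (by simp) hC)

theorem exists_mem_principalCongruenceSubgroup_mul_inv_cube_mem_succ (m : ℕ)
    {g A : SL(2, ℤ_[3])} (hA : A ∈ principalCongruenceSubgroup (Fin 2) 𝔭)
    (hgA : g * (A ^ 3)⁻¹ ∈ principalCongruenceSubgroup (Fin 2) (𝔭 ^ (m + 2))) :
    ∃ A' ∈ principalCongruenceSubgroup (Fin 2) 𝔭,
      g * (A' ^ 3)⁻¹ ∈ principalCongruenceSubgroup (Fin 2) (𝔭 ^ (m + 3)) := by
  obtain ⟨C, hC, hCW⟩ := exists_mem_principalCongruenceSubgroup_sub_three_nsmul_mem m hgA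
  refine ⟨C * A, mul_mem (principalCongruenceSubgroup_mono (Ideal.pow_le_self (by omega)) hC) hA,
    mul_inv_mem_principalCongruenceSubgroup_iff.2 ?_⟩
  set W := g * (A ^ 3)⁻¹
  have hg : g = W * A ^ 3 := by simp [W]
  set B : M₂ := 1 + 3 • ((C : M₂) - 1)
  rw [show (g : M₂) - (((C * A) ^ 3 : SL(2, ℤ_[3])) : M₂) =
      ((W : M₂) - B) * (A : M₂) ^ 3 - (((C : M₂) * A) ^ 3 - B * (A : M₂) ^ 3) by
    simp only [hg]; noncomm_ring]
  exact sub_mem (Ideal.mul_mem_matrix_right hCW _)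
    (Ideal.mul_cube_sub_mem_matrix_pow (Ideal.mem_span_singleton_self 3)
      (mem_principalCongruenceSubgroup_iff.1 hA) (mem_principalCongruenceSubgroup_iff.1 hC))

theorem exists_mem_principalCongruenceSubgroup_mul_inv_cube_mem {g : SL(2, ℤ_[3])}
    (hg : g ∈ principalCongruenceSubgroup (Fin 2) (𝔭 ^ 2)) (m : ℕ) :
    ∃ A ∈ principalCongruenceSubgroup (Fin 2) 𝔭,
      g * (A ^ 3)⁻¹ ∈ principalCongruenceSubgroup (Fin 2) (𝔭 ^ (m + 2)) := by
  induction m with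
  | zero => exact ⟨1, one_mem _, by simpa using hg⟩
  | succ m ih =>
    obtain ⟨A, hA, hgA⟩ := ih
    exact exists_mem_principalCongruenceSubgroup_mul_inv_cube_mem_succ m hA hgA

theorem exists_mem_principalCongruenceSubgroup_pow_three_eq {g : SL(2, ℤ_[3])}
    (hg : g ∈ principalCongruenceSubgroup (Fin 2) (𝔭 ^ 2)) :
    ∃ A ∈ principalCongruenceSubgroup (Fin 2) 𝔭, A ^ 3 = g := by
  set t : ℕ → Set SL(2, ℤ_[3]) := fun m =>
    {A | A ∈ principalCongruenceSubgroup (Fin 2) 𝔭 ∧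
      g * (A ^ 3)⁻¹ ∈ principalCongruenceSubgroup (Fin 2) (𝔭 ^ (m + 2))}
  have ht : ∀ m, IsClosed (t m) := fun m =>
    (isClosed_principalCongruenceSubgroup (Ideal.isClosed_span_singleton _)).inter
      ((isClosed_principalCongruenceSubgroup (isClosed_span_three_pow _)).preimage (by fun_prop))
  obtain ⟨A, hA⟩ := IsCompact.nonempty_iInter_of_sequence_nonempty_isCompact_isClosed t
    (fun _ _ hA =>
      ⟨hA.1, principalCongruenceSubgroup_mono (Ideal.pow_le_pow_right (by omega)) hA.2⟩)
    (exists_mem_principalCongruenceSubgroup_mul_inv_cube_mem hg) (ht 0).isCompact ht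
  rw [Set.mem_iInter] at hA
  have hinf : ⨅ k, 𝔭 ^ k = ⊥ := Ideal.iInf_pow_eq_bot_of_isDomain _
    (span_three_eq_maximalIdeal ▸ (maximalIdeal.isMaximal ℤ_[3]).ne_top)
  refine ⟨A, (hA 0).1, (mul_inv_eq_one.1 ?_).symm⟩
  exact eq_one_of_forall_mem_principalCongruenceSubgroup_pow hinf fun k =>
    principalCongruenceSubgroup_mono (Ideal.pow_le_pow_right (by omega)) (hA k).2

end PadicInt

/-- Every element of the closure of the commutator subgroup `[N₁, N₁]` in
`SL₂(ℤ₃)` is the cube `A³` of some element `A ∈ N₁`. -/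
theorem stmt_10 (N : ℕ → Subgroup SL(2, ℤ_[3]))
    (hN : ∀ k, ∀ A : SL(2, ℤ_[3]), A ∈ N k ↔
      ∀ i j, (3 : ℤ_[3]) ^ k ∣
        ((A : Matrix (Fin 2) (Fin 2) ℤ_[3]) i j - (1 : Matrix (Fin 2) (Fin 2) ℤ_[3]) i j)) :
    ∀ g ∈ (⁅N 1, N 1⁆ : Subgroup SL(2, ℤ_[3])).topologicalClosure,
      ∃ A ∈ N 1, A ^ 3 = g := by
  have hN : ∀ k, N k =
      SpecialLinearGroup.principalCongruenceSubgroup (Fin 2) (Ideal.span {(3 : ℤ_[3])} ^ k) :=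
    fun k => Subgroup.ext fun A => by
      rw [hN, SpecialLinearGroup.mem_principalCongruenceSubgroup_iff, Ideal.span_singleton_pow]
      simp [Ideal.mem_span_singleton]
  intro g hg
  simp only [hN, pow_one] at hg ⊢
  refine PadicInt.exists_mem_principalCongruenceSubgroup_pow_three_eq
    (Subgroup.topologicalClosure_minimal _ ?_ ?_ hg)
  · exact pow_two (Ideal.span {(3 : ℤ_[3])}) ▸
      SpecialLinearGroup.commutator_principalCongruenceSubgroup_le
  · exact SpecialLinearGroup.isClosed_principalCongruenceSubgroup
      (PadicInt.isClosed_span_three_pow 2)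
end
end
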